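/- arXiv:2404.04014 — 5 statements merged into one kernel-verified Lean document; each statement's English description precedes it below -/
import Mathlib

section
/- For any partitions λ and ρ and any non-negative integer k, the number of partitions ν with λ ≺ ν ≻ ρ (i.e., ν/λ and ν/ρ are horizontal strips) and |ν/(λ∪ρ)| = k equals the sum over i from 0 to k of the number of partitions μ with λ ≻ μ ≺ ρ (i.e., λ/μ and ρ/μ are horizontal strips) and |(λ∩ρ)/μ| = i. -/
/-- A partition, encoded as a weakly decreasing eventually-zero sequence of
natural numbers (`part i` is the `(i+1)`-st part). -/
structure Ptn where
  part : ℕ → ℕ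
  anti : Antitone part
  fin : ∃ N, ∀ n, N ≤ n → part n = 0

namespace Ptn

/-- The number of cells of the skew diagram `lam / mu`. -/
noncomputable def skewSize (lam mu : Ptn) : ℕ := ∑ᶠ i, (lam.part i - mu.part i)

/-- `HStrip mu lam` means `mu ≺ lam`, i.e. `mu ⊆ lam` and the skew diagram
`lam/mu` is a horizontal strip (at most one cell in each column). -/
def HStrip (mu lam : Ptn) : Prop :=
  (∀ i, mu.part i ≤ lam.part i) ∧ ∀ i, lam.part (i + 1) ≤ mu.part i

/-- `VStrip mu lam` means `mu ≺' lam`, i.e. `mu ⊆ lam` and the skew diagram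
`lam/mu` is a vertical strip (at most one cell in each row). -/
def VStrip (mu lam : Ptn) : Prop :=
  (∀ i, mu.part i ≤ lam.part i) ∧ ∀ i, lam.part i ≤ mu.part i + 1

/-- The union `lam ∪ rho` of two Young diagrams. -/
def union (a b : Ptn) : Ptn where
  part i := max (a.part i) (b.part i)
  anti := fun _ _ h => max_le_max (a.anti h) (b.anti h)
  fin := by
    obtain ⟨N, hN⟩ := a.fin
    obtain ⟨M, hM⟩ := b.fin
    exact ⟨max N M, fun n hn => by
      show max (a.part n) (b.part n) = 0
      rw [hN n (le_trans (le_max_left _ _) hn), hM n (le_trans (le_max_right _ _) hn)]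
      rfl⟩

/-- The intersection `lam ∩ rho` of two Young diagrams. -/
def inter (a b : Ptn) : Ptn where
  part i := min (a.part i) (b.part i)
  anti := fun _ _ h => min_le_min (a.anti h) (b.anti h)
  fin := by
    obtain ⟨N, hN⟩ := a.fin
    exact ⟨N, fun n hn => by
      show min (a.part n) (b.part n) = 0
      simp [hN n hn]⟩

/-- The empty partition. -/
def empty : Ptn := ⟨fun _ => 0, fun _ _ _ => le_refl 0, ⟨0, fun _ _ => rfl⟩⟩

/-- The conjugate partition: `(conj lam).part j` is the length of column `j`. -/
noncomputable def conj (lam : Ptn) : Ptn where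
  part j := Set.ncard {i | j < lam.part i}
  anti := by
    intro j k h
    apply Set.ncard_le_ncard
    · intro i hi
      exact lt_of_le_of_lt h hi
    · obtain ⟨N, hN⟩ := lam.fin
      apply Set.Finite.subset (Set.finite_Iio N)
      intro i hi
      by_contra hc
      have hNi : N ≤ i := not_lt.mp (fun h => hc (Set.mem_Iio.mpr h))
      rw [Set.mem_setOf_eq, hN i hNi] at hi
      exact Nat.not_lt_zero j hi
  fin := by
    refine ⟨lam.part 0, fun n hn => ?_⟩
    have h : {i | n < lam.part i} = (∅ : Set ℕ) := by
      ext i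
      simp only [Set.mem_setOf_eq, Set.mem_empty_iff_false, iff_false, not_lt]
      exact le_trans (lam.anti (Nat.zero_le i)) hn
    show Set.ncard {i | n < lam.part i} = 0
    rw [h, Set.ncard_empty]

end Ptn

section UDAux
open Ptn

open Ptn

theorem Ptn.ext' {a b : Ptn} (h : a.part = b.part) : a = b := by
  cases a; cases b; cases h; rfl

lemma finsum_nat_eq_range {f : ℕ → ℕ} {N : ℕ} (h : ∀ n, N ≤ n → f n = 0) :
    ∑ᶠ i, f i = ∑ i ∈ Finset.range N, f i := by
  apply finsum_eq_sum_of_support_subset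
  intro x hx
  simp only [Function.mem_support] at hx
  simp only [Finset.coe_range, Set.mem_Iio]
  by_contra hc
  exact hx (h x (not_lt.mp hc))

/-- μ from ν by reflection. -/
def udMkMu (lam rho ν : Ptn) (h1 : HStrip lam ν) (h2 : HStrip rho ν) : Ptn where
  part j := max (lam.part (j+1)) (rho.part (j+1)) + min (lam.part j) (rho.part j) - ν.part (j+1)
  anti := antitone_nat_of_succ_le fun j => by
    have a1 := h1.1 (j+1+1); have a2 := h2.1 (j+1+1)
    have b1 := h1.2 (j+1); have b2 := h2.2 (j+1)
    have c1 := h1.2 j; have c2 := h2.2 j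
    omega
  fin := by
    obtain ⟨N, hN⟩ := lam.fin
    obtain ⟨M, hM⟩ := rho.fin
    refine ⟨max N M, fun n hn => ?_⟩
    have e1 : lam.part n = 0 := hN n (le_trans (le_max_left _ _) hn)
    have e2 : rho.part n = 0 := hM n (le_trans (le_max_right _ _) hn)
    have e3 : lam.part (n+1) = 0 := hN _ (by omega)
    have e4 : rho.part (n+1) = 0 := hM _ (by omega)
    have c1 := h1.2 n; have c2 := h2.2 n
    show max (lam.part (n+1)) (rho.part (n+1)) + min (lam.part n) (rho.part n) - ν.part (n+1) = 0
    omega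

/-- ν from μ and an extra top-row count c. -/
def udMkNu (lam rho mu : Ptn) (c : ℕ) (g1 : HStrip mu lam) (g2 : HStrip mu rho) : Ptn where
  part j := match j with
    | 0 => max (lam.part 0) (rho.part 0) + c
    | j+1 => max (lam.part (j+1)) (rho.part (j+1)) + min (lam.part j) (rho.part j) - mu.part j
  anti := antitone_nat_of_succ_le fun j => by
    match j with
    | 0 =>
      have a1 := g1.2 0; have a2 := g2.2 0
      show max (lam.part (0+1)) (rho.part (0+1)) + min (lam.part 0) (rho.part 0) - mu.part 0
        ≤ max (lam.part 0) (rho.part 0) + c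
      omega
    | j+1 =>
      have a1 := g1.2 (j+1); have a2 := g2.2 (j+1)
      have b1 := g1.1 j; have b2 := g2.1 j
      show max (lam.part (j+1+1)) (rho.part (j+1+1)) + min (lam.part (j+1)) (rho.part (j+1)) - mu.part (j+1)
        ≤ max (lam.part (j+1)) (rho.part (j+1)) + min (lam.part j) (rho.part j) - mu.part j
      omega
  fin := by
    obtain ⟨N, hN⟩ := lam.fin
    obtain ⟨M, hM⟩ := rho.fin
    refine ⟨max N M + 1, fun n hn => ?_⟩
    match n, hn with
    | j+1, hn =>
      have e1 : lam.part j = 0 := hN j (by omega)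
      have e2 : rho.part j = 0 := hM j (by omega)
      have e3 : lam.part (j+1) = 0 := hN _ (by omega)
      have e4 : rho.part (j+1) = 0 := hM _ (by omega)
      show max (lam.part (j+1)) (rho.part (j+1)) + min (lam.part j) (rho.part j) - mu.part j = 0
      omega

lemma udMkMu_strip (lam rho ν : Ptn) (h1 : HStrip lam ν) (h2 : HStrip rho ν) :
    HStrip (udMkMu lam rho ν h1 h2) lam ∧ HStrip (udMkMu lam rho ν h1 h2) rho := by
  have key : ∀ j, max (lam.part (j+1)) (rho.part (j+1)) ≤ ν.part (j+1) ∧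
      ν.part (j+1) ≤ min (lam.part j) (rho.part j) := fun j =>
    ⟨max_le (h1.1 (j+1)) (h2.1 (j+1)), le_min (h1.2 j) (h2.2 j)⟩
  refine ⟨⟨fun j => ?_, fun j => ?_⟩, ⟨fun j => ?_, fun j => ?_⟩⟩ <;>
    · have k1 := key j
      show _ ≤ _
      simp only [udMkMu]
      omega

lemma udMkNu_strip (lam rho mu : Ptn) (c : ℕ) (g1 : HStrip mu lam) (g2 : HStrip mu rho) :
    HStrip lam (udMkNu lam rho mu c g1 g2) ∧ HStrip rho (udMkNu lam rho mu c g1 g2) := by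
  have key : ∀ j, max (lam.part (j+1)) (rho.part (j+1)) ≤ mu.part j ∧
      mu.part j ≤ min (lam.part j) (rho.part j) := fun j =>
    ⟨max_le (g1.2 j) (g2.2 j), le_min (g1.1 j) (g2.1 j)⟩
  constructor <;> constructor <;> intro j
  · match j with
    | 0 => show lam.part 0 ≤ max (lam.part 0) (rho.part 0) + c; omega
    | j+1 =>
      have k1 := key j
      show lam.part (j+1) ≤ max (lam.part (j+1)) (rho.part (j+1)) + min (lam.part j) (rho.part j) - mu.part j
      omega
  · have k1 := key j
    show max (lam.part (j+1)) (rho.part (j+1)) + min (lam.part j) (rho.part j) - mu.part j ≤ lam.part j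
    have := lam.anti (show j ≤ j+1 by omega)
    omega
  · match j with
    | 0 => show rho.part 0 ≤ max (lam.part 0) (rho.part 0) + c; omega
    | j+1 =>
      have k1 := key j
      show rho.part (j+1) ≤ max (lam.part (j+1)) (rho.part (j+1)) + min (lam.part j) (rho.part j) - mu.part j
      omega
  · have k1 := key j
    show max (lam.part (j+1)) (rho.part (j+1)) + min (lam.part j) (rho.part j) - mu.part j ≤ rho.part j
    omega

lemma ud_skew_split (lam rho ν : Ptn) (h1 : HStrip lam ν) (h2 : HStrip rho ν) :
    skewSize (inter lam rho) (udMkMu lam rho ν h1 h2)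
      + (ν.part 0 - max (lam.part 0) (rho.part 0)) = skewSize ν (union lam rho) := by
  obtain ⟨N, hN⟩ := lam.fin
  obtain ⟨M, hM⟩ := rho.fin
  obtain ⟨K, hK⟩ := ν.fin
  set L := max (max N M) K with hL
  have hlam : ∀ n, L ≤ n → lam.part n = 0 := fun n hn => hN n (by omega)
  have hrho : ∀ n, L ≤ n → rho.part n = 0 := fun n hn => hM n (by omega)
  have hnu : ∀ n, L ≤ n → ν.part n = 0 := fun n hn => hK n (by omega)
  rw [skewSize, skewSize,
    finsum_nat_eq_range (N := L) (f := fun i => (inter lam rho).part i - (udMkMu lam rho ν h1 h2).part i)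
      (fun n hn => by
        have e1 := hlam n hn; have e2 := hrho n hn
        show min (lam.part n) (rho.part n) - _ = 0
        omega),
    finsum_nat_eq_range (N := L + 1) (f := fun i => ν.part i - (union lam rho).part i)
      (fun n hn => by
        have e1 := hnu n (by omega)
        show ν.part n - max (lam.part n) (rho.part n) = 0
        omega),
    Finset.sum_range_succ']
  have step : ∀ i, (inter lam rho).part i - (udMkMu lam rho ν h1 h2).part i
      = ν.part (i+1) - (union lam rho).part (i+1) := by
    intro i
    have a1 := h1.1 (i+1); have a2 := h2.1 (i+1)
    have b1 := h1.2 i; have b2 := h2.2 i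
    show min (lam.part i) (rho.part i)
        - (max (lam.part (i+1)) (rho.part (i+1)) + min (lam.part i) (rho.part i) - ν.part (i+1))
      = ν.part (i+1) - max (lam.part (i+1)) (rho.part (i+1))
    omega
  rw [Finset.sum_congr rfl (fun i _ => step i)]
  rfl

lemma ud_skew_nu (lam rho mu : Ptn) (c : ℕ) (g1 : HStrip mu lam) (g2 : HStrip mu rho) :
    skewSize (udMkNu lam rho mu c g1 g2) (union lam rho)
      = c + skewSize (inter lam rho) mu := by
  obtain ⟨N, hN⟩ := lam.fin
  obtain ⟨M, hM⟩ := rho.fin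
  set L := max N M with hL
  have hlam : ∀ n, L ≤ n → lam.part n = 0 := fun n hn => hN n (by omega)
  have hrho : ∀ n, L ≤ n → rho.part n = 0 := fun n hn => hM n (by omega)
  rw [skewSize, skewSize,
    finsum_nat_eq_range (N := L + 1)
      (f := fun i => (udMkNu lam rho mu c g1 g2).part i - (union lam rho).part i)
      (fun n hn => by
        match n, hn with
        | j+1, hn =>
          have e1 := hlam j (by omega); have e2 := hrho j (by omega)
          have e3 := hlam (j+1) (by omega); have e4 := hrho (j+1) (by omega)
          show max (lam.part (j+1)) (rho.part (j+1)) + min (lam.part j) (rho.part j) - mu.part j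
              - max (lam.part (j+1)) (rho.part (j+1)) = 0
          omega),
    finsum_nat_eq_range (N := L) (f := fun i => (inter lam rho).part i - mu.part i)
      (fun n hn => by
        have e1 := hlam n hn; have e2 := hrho n hn
        show min (lam.part n) (rho.part n) - mu.part n = 0
        omega),
    Finset.sum_range_succ']
  have step : ∀ i, (udMkNu lam rho mu c g1 g2).part (i+1) - (union lam rho).part (i+1)
      = (inter lam rho).part i - mu.part i := by
    intro i
    have a1 := g1.1 i; have a2 := g2.1 i
    have b1 := g1.2 i; have b2 := g2.2 i
    show max (lam.part (i+1)) (rho.part (i+1)) + min (lam.part i) (rho.part i) - mu.part i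
        - max (lam.part (i+1)) (rho.part (i+1))
      = min (lam.part i) (rho.part i) - mu.part i
    omega
  rw [Finset.sum_congr rfl (fun i _ => step i)]
  have h0 : (udMkNu lam rho mu c g1 g2).part 0 - (union lam rho).part 0 = c := by
    show max (lam.part 0) (rho.part 0) + c - max (lam.part 0) (rho.part 0) = c
    omega
  rw [h0]
  omega

noncomputable def udEquiv (lam rho : Ptn) (k : ℕ) :
    {ν : Ptn // HStrip lam ν ∧ HStrip rho ν ∧ skewSize ν (union lam rho) = k} ≃
    (i : Fin (k+1)) × {mu : Ptn // HStrip mu lam ∧ HStrip mu rho ∧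
      skewSize (inter lam rho) mu = i.1} where
  toFun ν := ⟨⟨skewSize (inter lam rho) (udMkMu lam rho ν.1 ν.2.1 ν.2.2.1), by
      have hs := ud_skew_split lam rho ν.1 ν.2.1 ν.2.2.1
      have h3 := ν.2.2.2
      omega⟩,
    ⟨udMkMu lam rho ν.1 ν.2.1 ν.2.2.1,
      (udMkMu_strip lam rho ν.1 ν.2.1 ν.2.2.1).1,
      (udMkMu_strip lam rho ν.1 ν.2.1 ν.2.2.1).2, rfl⟩⟩
  invFun x := ⟨udMkNu lam rho x.2.1 (k - x.1.1) x.2.2.1 x.2.2.2.1,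
    (udMkNu_strip lam rho x.2.1 (k - x.1.1) x.2.2.1 x.2.2.2.1).1,
    (udMkNu_strip lam rho x.2.1 (k - x.1.1) x.2.2.1 x.2.2.2.1).2, by
      rw [ud_skew_nu, x.2.2.2.2]
      have := x.1.2
      omega⟩
  left_inv := by
    rintro ⟨ν, h1, h2, h3⟩
    apply Subtype.ext
    apply Ptn.ext'
    funext j
    match j with
    | 0 =>
      have hs := ud_skew_split lam rho ν h1 h2
      have a1 := h1.1 0; have a2 := h2.1 0
      show max (lam.part 0) (rho.part 0)
          + (k - skewSize (inter lam rho) (udMkMu lam rho ν h1 h2)) = ν.part 0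
      omega
    | j+1 =>
      have a1 := h1.1 (j+1); have a2 := h2.1 (j+1)
      have b1 := h1.2 j; have b2 := h2.2 j
      show max (lam.part (j+1)) (rho.part (j+1)) + min (lam.part j) (rho.part j)
          - (max (lam.part (j+1)) (rho.part (j+1)) + min (lam.part j) (rho.part j) - ν.part (j+1))
        = ν.part (j+1)
      omega
  right_inv := by
    rintro ⟨⟨i, hi⟩, μ, g1, g2, g3⟩
    have hmu : udMkMu lam rho (udMkNu lam rho μ (k - i) g1 g2)
        (udMkNu_strip lam rho μ (k - i) g1 g2).1
        (udMkNu_strip lam rho μ (k - i) g1 g2).2 = μ := by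
      apply Ptn.ext'
      funext j
      have a1 := g1.1 j; have a2 := g2.1 j
      have b1 := g1.2 j; have b2 := g2.2 j
      show max (lam.part (j+1)) (rho.part (j+1)) + min (lam.part j) (rho.part j)
          - (max (lam.part (j+1)) (rho.part (j+1)) + min (lam.part j) (rho.part j) - μ.part j)
        = μ.part j
      omega
    refine Sigma.subtype_ext ?_ hmu
    apply Fin.ext
    show skewSize (inter lam rho) _ = i
    rw [hmu, g3]

lemma ud_finite (lam rho : Ptn) (i : ℕ) :
    Finite {mu : Ptn // HStrip mu lam ∧ HStrip mu rho ∧ skewSize (inter lam rho) mu = i} := by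
  obtain ⟨N, hN⟩ := lam.fin
  apply Finite.of_injective (f := fun μ => (fun j : Fin N =>
    (⟨μ.1.part j, by
      have a1 := μ.2.1.1 (j : ℕ)
      have a2 := lam.anti (Nat.zero_le (j : ℕ))
      omega⟩ : Fin (lam.part 0 + 1))))
  intro a b h
  apply Subtype.ext
  apply Ptn.ext'
  funext j
  by_cases hj : j < N
  · have := congrFun h ⟨j, hj⟩
    simpa using this
  · have ha : a.1.part j = 0 := by have := a.2.1.1 j; have := hN j (by omega); omega
    have hb : b.1.part j = 0 := by have := b.2.1.1 j; have := hN j (by omega); omega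
    rw [ha, hb]

lemma ud_card_sigma {n : ℕ} (α : Fin n → Type*) [∀ i, Finite (α i)] :
    Nat.card ((i : Fin n) × α i) = ∑ i, Nat.card (α i) := by
  letI := fun i => Fintype.ofFinite (α i)
  simp [Nat.card_eq_fintype_card]


end UDAux

open Ptn in
/-- For any partitions `lam`, `rho` and `k ≥ 0`, the number of partitions `ν`
with `lam ≺ ν ≻ rho` and `|ν/(lam ∪ rho)| = k` equals the sum over
`0 ≤ i ≤ k` of the number of partitions `μ` with `lam ≻ μ ≺ rho` and
`|(lam ∩ rho)/μ| = i`. -/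
theorem up_down_commutation_count (lam rho : Ptn) (k : ℕ) :
    Nat.card {ν : Ptn // HStrip lam ν ∧ HStrip rho ν ∧ skewSize ν (union lam rho) = k} =
      ∑ i ∈ Finset.range (k + 1),
        Nat.card {mu : Ptn // HStrip mu lam ∧ HStrip mu rho ∧
          skewSize (inter lam rho) mu = i} := by
  rw [Nat.card_congr (udEquiv lam rho k)]
  haveI : ∀ i : Fin (k+1), Finite {mu : Ptn // HStrip mu lam ∧ HStrip mu rho ∧
      skewSize (inter lam rho) mu = i.1} := fun i => ud_finite lam rho i.1
  rw [ud_card_sigma]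
  exact Fin.sum_univ_eq_sum_range (fun j => Nat.card {mu : Ptn // HStrip mu lam ∧
    HStrip mu rho ∧ skewSize (inter lam rho) mu = j}) (k+1)
end

section
/- For any partitions λ and ρ and any non-negative integer k, the number of partitions ν with λ ≺' ν and ν ≻ ρ (ν/λ a vertical strip and ν/ρ a horizontal strip) and |ν/(λ∪ρ)| = k equals the number of partitions μ with λ ≻ μ and μ ≺' ρ (λ/μ a horizontal strip and ρ/μ a vertical strip) and |(λ∩ρ)/μ| = k, plus the number of such μ with |(λ∩ρ)/μ| = k−1. -/
namespace UpDownAux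

open Ptn

theorem ptn_ext {a b : Ptn} (h : ∀ i, a.part i = b.part i) : a = b := by
  cases a; cases b; simpa using funext h

/-- Feasibility: necessary for either side to be nonempty. -/
def Feas (lam rho : Ptn) : Prop :=
  (∀ i, rho.part i ≤ lam.part i + 1) ∧ ∀ i, lam.part (i + 1) ≤ rho.part i

/-- Free positions for the `ν` side. -/
def Afin (lam rho : Ptn) (N : ℕ) : Finset ℕ :=
  (Finset.range (N + 1)).filter fun i =>
    rho.part i ≤ lam.part i ∧ (i = 0 ∨ lam.part i < rho.part (i - 1))

/-- Free positions for the `μ` side. -/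
def Bfin (lam rho : Ptn) (N : ℕ) : Finset ℕ :=
  (Finset.range (N + 1)).filter fun i =>
    rho.part i ≤ lam.part i ∧ lam.part (i + 1) < rho.part i

theorem card_Afin (lam rho : Ptn) (N : ℕ)
    (hrN : ∀ i, N ≤ i → rho.part i = 0) :
    (Afin lam rho N).card = (Bfin lam rho N).card + 1 := by
  classical
  have key : ∀ M : ℕ,
      ((∑ i ∈ Finset.range (M + 1),
          if rho.part i ≤ lam.part i ∧ (i = 0 ∨ lam.part i < rho.part (i - 1)) then 1 else 0)
        + (if lam.part M < rho.part M then 1 else 0))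
      = 1 + ∑ i ∈ Finset.range M,
          if rho.part i ≤ lam.part i ∧ lam.part (i + 1) < rho.part i then 1 else 0 := by
    intro M
    induction M with
    | zero =>
      rw [Finset.sum_range_succ, Finset.sum_range_zero, Finset.sum_range_zero, zero_add, add_zero]
      have hcond : (if rho.part 0 ≤ lam.part 0 ∧ (0 = 0 ∨ lam.part 0 < rho.part (0 - 1))
          then 1 else 0) = (if rho.part 0 ≤ lam.part 0 then (1 : ℕ) else 0) :=
        if_congr (by simp) rfl rfl
      rw [hcond]
      split_ifs <;> omega
    | succ M ih =>
      rw [Finset.sum_range_succ (fun i => if rho.part i ≤ lam.part i ∧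
          (i = 0 ∨ lam.part i < rho.part (i - 1)) then 1 else 0) (M + 1),
        Finset.sum_range_succ (fun i => if rho.part i ≤ lam.part i ∧
          lam.part (i + 1) < rho.part i then 1 else 0) M]
      have h1 : lam.part (M + 1) ≤ lam.part M := lam.anti (Nat.le_succ M)
      have h2 : rho.part (M + 1) ≤ rho.part M := rho.anti (Nat.le_succ M)
      have hcond : (if rho.part (M + 1) ≤ lam.part (M + 1) ∧
            (M + 1 = 0 ∨ lam.part (M + 1) < rho.part (M + 1 - 1)) then 1 else 0)
          = (if rho.part (M + 1) ≤ lam.part (M + 1) ∧ lam.part (M + 1) < rho.part M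
            then (1 : ℕ) else 0) :=
        if_congr (by simp) rfl rfl
      rw [hcond]
      have hstep :
          ((if rho.part (M + 1) ≤ lam.part (M + 1) ∧ lam.part (M + 1) < rho.part M
              then 1 else 0)
            + (if lam.part (M + 1) < rho.part (M + 1) then 1 else 0))
          = (if rho.part M ≤ lam.part M ∧ lam.part (M + 1) < rho.part M then 1 else 0)
            + (if lam.part M < rho.part M then 1 else 0) := by
        split_ifs <;> omega
      omega
  have hA : (Afin lam rho N).card
      = ∑ i ∈ Finset.range (N + 1),
          if rho.part i ≤ lam.part i ∧ (i = 0 ∨ lam.part i < rho.part (i - 1)) then 1 else 0 :=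
    Finset.card_filter _ _
  have hB : (Bfin lam rho N).card
      = ∑ i ∈ Finset.range (N + 1),
          if rho.part i ≤ lam.part i ∧ lam.part (i + 1) < rho.part i then 1 else 0 :=
    Finset.card_filter _ _
  have hBlast : (if rho.part N ≤ lam.part N ∧ lam.part (N + 1) < rho.part N then 1 else 0) = 0 := by
    have := hrN N le_rfl
    split_ifs <;> omega
  have hclast : (if lam.part N < rho.part N then 1 else 0) = 0 := by
    have := hrN N le_rfl
    split_ifs <;> omega
  have := key N
  rw [hB, Finset.sum_range_succ, hBlast, hA]
  omega

theorem finsum_indicator (f : ℕ → ℕ) (S : Finset ℕ)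
    (h : ∀ i, f i = if i ∈ S then 1 else 0) :
    ∑ᶠ i, f i = S.card := by
  classical
  have hsupp : Function.support f ⊆ (S : Set ℕ) := by
    intro i hi
    rw [Function.mem_support] at hi
    rw [Finset.mem_coe]
    by_contra hc
    rw [h i, if_neg hc] at hi
    exact hi rfl
  rw [finsum_eq_sum_of_support_subset f hsupp]
  calc ∑ i ∈ S, f i = ∑ i ∈ S, 1 := Finset.sum_congr rfl fun i hi => by simp [h i, hi]
    _ = S.card := by simp

theorem card_subsets (t : Finset ℕ) (k : ℕ) :
    Nat.card {S : Finset ℕ // S ⊆ t ∧ S.card = k} = t.card.choose k := by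
  classical
  rw [← Finset.card_powersetCard, ← Nat.card_eq_finsetCard]
  exact Nat.card_congr (Equiv.subtypeEquivRight fun S => Finset.mem_powersetCard.symm)

section NuSide

variable (lam rho : Ptn) (N : ℕ)

/-- The candidate `ν` associated to a set `S` of free positions. -/
def nuOf (hF : Feas lam rho) (hrN : ∀ i, N ≤ i → rho.part i = 0)
    (hlN : ∀ i, N ≤ i → lam.part i = 0)
    (S : Finset ℕ) (hS : S ⊆ Afin lam rho N) : Ptn where
  part i := if i ∈ S ∨ lam.part i < rho.part i then lam.part i + 1 else lam.part i
  anti := by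
    apply antitone_nat_of_succ_le
    intro i
    have hub : (if i + 1 ∈ S ∨ lam.part (i + 1) < rho.part (i + 1) then lam.part (i + 1) + 1
        else lam.part (i + 1)) ≤ rho.part i := by
      split_ifs with h
      · rcases h with h | h
        · have hm := (Finset.mem_filter.1 (hS h)).2
          rcases hm.2 with h0 | hlt
          · omega
          · simpa using hlt
        · have : rho.part (i + 1) ≤ rho.part i := rho.anti (Nat.le_succ i)
          omega
      · exact hF.2 i
    have hlb : rho.part i ≤ (if i ∈ S ∨ lam.part i < rho.part i then lam.part i + 1
        else lam.part i) := by
      split_ifs with h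
      · exact (hF.1 i)
      · push_neg at h
        exact h.2
    exact le_trans hub hlb
  fin := by
    refine ⟨N + 1, fun n hn => ?_⟩
    have h1 : n ∉ S := by
      intro hc
      have := Finset.mem_range.1 (Finset.mem_of_mem_filter n (hS hc))
      omega
    have h2 : rho.part n = 0 := hrN n (by omega)
    have h3 : lam.part n = 0 := hlN n (by omega)
    simp only [h1, false_or]
    rw [if_neg (by omega)]
    exact h3

theorem nuOf_part (hF : Feas lam rho) (hrN : ∀ i, N ≤ i → rho.part i = 0)
    (hlN : ∀ i, N ≤ i → lam.part i = 0)
    (S : Finset ℕ) (hS : S ⊆ Afin lam rho N) (i : ℕ) :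
    (nuOf lam rho N hF hrN hlN S hS).part i
      = if i ∈ S ∨ lam.part i < rho.part i then lam.part i + 1 else lam.part i := rfl

theorem nuOf_strips (hF : Feas lam rho) (hrN : ∀ i, N ≤ i → rho.part i = 0)
    (hlN : ∀ i, N ≤ i → lam.part i = 0)
    (S : Finset ℕ) (hS : S ⊆ Afin lam rho N) :
    VStrip lam (nuOf lam rho N hF hrN hlN S hS)
      ∧ HStrip rho (nuOf lam rho N hF hrN hlN S hS) := by
  refine ⟨⟨fun i => ?_, fun i => ?_⟩, ⟨fun i => ?_, fun i => ?_⟩⟩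
  · rw [nuOf_part]; split_ifs <;> omega
  · rw [nuOf_part]; split_ifs <;> omega
  · rw [nuOf_part]
    have := hF.1 i
    split_ifs with h
    · omega
    · push_neg at h; exact h.2
  · rw [nuOf_part]
    split_ifs with h
    · rcases h with h | h
      · have hm := (Finset.mem_filter.1 (hS h)).2
        rcases hm.2 with h0 | hlt
        · omega
        · simpa using hlt
      · have : rho.part (i + 1) ≤ rho.part i := rho.anti (Nat.le_succ i)
        omega
    · exact hF.2 i

/-- Any `ν` whose parts are given by the `S`-formula has skew size `S.card`. -/
theorem nu_size (hF : Feas lam rho) (S : Finset ℕ) (hS : S ⊆ Afin lam rho N) (nu : Ptn)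
    (hnu : ∀ i, nu.part i
      = if i ∈ S ∨ lam.part i < rho.part i then lam.part i + 1 else lam.part i) :
    skewSize nu (union lam rho) = S.card := by
  apply finsum_indicator
  intro i
  have hU : (union lam rho).part i = max (lam.part i) (rho.part i) := rfl
  have h1 := hF.1 i
  rw [hU, hnu i]
  by_cases hiS : i ∈ S
  · have hm := (Finset.mem_filter.1 (hS hiS)).2
    rw [if_pos (Or.inl hiS), if_pos hiS, max_eq_left hm.1]
    omega
  · rw [if_neg hiS]
    by_cases hlt : lam.part i < rho.part i
    · rw [if_pos (Or.inr hlt), max_eq_right (le_of_lt hlt)]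
      omega
    · rw [if_neg (by tauto), max_eq_left (by omega)]
      omega

/-- The set of free positions where `ν` takes the larger value. -/
def SOf (nu : Ptn) : Finset ℕ :=
  (Finset.range (N + 1)).filter fun i =>
    rho.part i ≤ lam.part i ∧ nu.part i = lam.part i + 1

theorem SOf_bound (hrN : ∀ i, N ≤ i → rho.part i = 0) (nu : Ptn)
    (hH : HStrip rho nu) (i : ℕ)
    (hpart : nu.part i = lam.part i + 1) : i < N + 1 := by
  by_contra hc
  obtain ⟨j, rfl⟩ : ∃ j, i = j + 1 := ⟨i - 1, by omega⟩
  have h1 := hH.2 j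
  have h2 := hrN j (by omega)
  omega

theorem SOf_subset (hrN : ∀ i, N ≤ i → rho.part i = 0) (nu : Ptn)
    (hV : VStrip lam nu) (hH : HStrip rho nu) :
    SOf lam rho N nu ⊆ Afin lam rho N := by
  intro i hi
  rw [SOf, Finset.mem_filter] at hi
  rw [Afin, Finset.mem_filter]
  refine ⟨hi.1, hi.2.1, ?_⟩
  rcases Nat.eq_zero_or_pos i with h0 | hpos
  · exact Or.inl h0
  · right
    obtain ⟨j, rfl⟩ : ∃ j, i = j + 1 := ⟨i - 1, by omega⟩
    have h1 := hH.2 j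
    have h2 := hi.2.2
    simpa using (by omega : lam.part (j + 1) < rho.part j)

theorem nu_part_eq (hrN : ∀ i, N ≤ i → rho.part i = 0) (nu : Ptn)
    (hV : VStrip lam nu) (hH : HStrip rho nu) (i : ℕ) :
    nu.part i = if i ∈ SOf lam rho N nu ∨ lam.part i < rho.part i
      then lam.part i + 1 else lam.part i := by
  have hv1 := hV.1 i
  have hv2 := hV.2 i
  have hh1 := hH.1 i
  by_cases hlt : lam.part i < rho.part i
  · rw [if_pos (Or.inr hlt)]; omega
  · by_cases hp : nu.part i = lam.part i + 1
    · have hiS : i ∈ SOf lam rho N nu := by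
        rw [SOf, Finset.mem_filter, Finset.mem_range]
        exact ⟨SOf_bound lam rho N hrN nu hH i hp, by omega, hp⟩
      rw [if_pos (Or.inl hiS)]; exact hp
    · have hiS : i ∉ SOf lam rho N nu := by
        rw [SOf, Finset.mem_filter]
        tauto
      rw [if_neg (by tauto)]; omega

theorem nu_count (hF : Feas lam rho) (hrN : ∀ i, N ≤ i → rho.part i = 0)
    (hlN : ∀ i, N ≤ i → lam.part i = 0) (p : ℕ → Prop) :
    Nat.card {nu : Ptn // VStrip lam nu ∧ HStrip rho nu ∧ p (skewSize nu (union lam rho))}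
      = Nat.card {S : Finset ℕ // S ⊆ Afin lam rho N ∧ p S.card} := by
  apply Nat.card_congr
  refine ⟨fun nu => ⟨SOf lam rho N nu.1,
      SOf_subset lam rho N hrN nu.1 nu.2.1 nu.2.2.1, ?_⟩,
    fun S => ⟨nuOf lam rho N hF hrN hlN S.1 S.2.1,
      (nuOf_strips lam rho N hF hrN hlN S.1 S.2.1).1,
      (nuOf_strips lam rho N hF hrN hlN S.1 S.2.1).2, ?_⟩, ?_, ?_⟩
  · have hsz := nu_size lam rho N hF (SOf lam rho N nu.1)
      (SOf_subset lam rho N hrN nu.1 nu.2.1 nu.2.2.1) nu.1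
      (nu_part_eq lam rho N hrN nu.1 nu.2.1 nu.2.2.1)
    rw [← hsz]
    exact nu.2.2.2
  · have hsz := nu_size lam rho N hF S.1 S.2.1 _
      (nuOf_part lam rho N hF hrN hlN S.1 S.2.1)
    rw [hsz]
    exact S.2.2
  · rintro ⟨nu, hnu⟩
    apply Subtype.ext
    apply ptn_ext
    intro i
    rw [nuOf_part]
    exact (nu_part_eq lam rho N hrN nu hnu.1 hnu.2.1 i).symm
  · rintro ⟨S, hS⟩
    apply Subtype.ext
    show SOf lam rho N (nuOf lam rho N hF hrN hlN S hS.1) = S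
    ext i
    rw [SOf, Finset.mem_filter, Finset.mem_range]
    constructor
    · rintro ⟨hiN, hrl, hpart⟩
      rw [nuOf_part] at hpart
      by_cases hiS : i ∈ S
      · exact hiS
      · exfalso
        rcases (em (lam.part i < rho.part i)) with hlt | hlt
        · omega
        · rw [if_neg (by tauto)] at hpart
          omega
    · intro hiS
      have hm := Finset.mem_filter.1 (hS.1 hiS)
      refine ⟨Finset.mem_range.1 hm.1, hm.2.1, ?_⟩
      rw [nuOf_part, if_pos (Or.inl hiS)]

end NuSide

section MuSide

variable (lam rho : Ptn) (N : ℕ)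

/-- The candidate `μ` associated to a set `S` of free positions. -/
def muOf (hF : Feas lam rho) (S : Finset ℕ) (hS : S ⊆ Bfin lam rho N) : Ptn where
  part i := if i ∈ S ∨ lam.part i < rho.part i then rho.part i - 1 else rho.part i
  anti := by
    apply antitone_nat_of_succ_le
    intro i
    have hub : (if i + 1 ∈ S ∨ lam.part (i + 1) < rho.part (i + 1) then rho.part (i + 1) - 1
        else rho.part (i + 1)) ≤ lam.part (i + 1) := by
      have h1 := hF.1 (i + 1)
      split_ifs with h
      · rcases h with h | h
        · have hm := (Finset.mem_filter.1 (hS h)).2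
          omega
        · omega
      · push_neg at h
        exact h.2
    have hlb : lam.part (i + 1) ≤ (if i ∈ S ∨ lam.part i < rho.part i then rho.part i - 1
        else rho.part i) := by
      have h2 := hF.2 i
      have h3 : lam.part (i + 1) ≤ lam.part i := lam.anti (Nat.le_succ i)
      split_ifs with h
      · rcases h with h | h
        · have hm := (Finset.mem_filter.1 (hS h)).2
          omega
        · omega
      · exact h2
    exact le_trans hub hlb
  fin := by
    obtain ⟨M, hM⟩ := rho.fin
    refine ⟨M, fun n hn => ?_⟩
    have := hM n hn
    show (if n ∈ S ∨ lam.part n < rho.part n then rho.part n - 1 else rho.part n) = 0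
    split_ifs <;> omega

theorem muOf_part (hF : Feas lam rho) (S : Finset ℕ) (hS : S ⊆ Bfin lam rho N) (i : ℕ) :
    (muOf lam rho N hF S hS).part i
      = if i ∈ S ∨ lam.part i < rho.part i then rho.part i - 1 else rho.part i := rfl

theorem muOf_strips (hF : Feas lam rho) (S : Finset ℕ) (hS : S ⊆ Bfin lam rho N) :
    HStrip (muOf lam rho N hF S hS) lam ∧ VStrip (muOf lam rho N hF S hS) rho := by
  refine ⟨⟨fun i => ?_, fun i => ?_⟩, ⟨fun i => ?_, fun i => ?_⟩⟩
  · rw [muOf_part]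
    have h1 := hF.1 i
    split_ifs with h
    · rcases h with h | h
      · have hm := (Finset.mem_filter.1 (hS h)).2
        omega
      · omega
    · push_neg at h
      exact h.2
  · rw [muOf_part]
    have h2 := hF.2 i
    have h3 : lam.part (i + 1) ≤ lam.part i := lam.anti (Nat.le_succ i)
    split_ifs with h
    · rcases h with h | h
      · have hm := (Finset.mem_filter.1 (hS h)).2
        omega
      · omega
    · exact h2
  · rw [muOf_part]; split_ifs <;> omega
  · rw [muOf_part]
    split_ifs with h
    · rcases h with h | h
      · have hm := (Finset.mem_filter.1 (hS h)).2
        omega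
      · omega
    · omega

theorem mu_size (hF : Feas lam rho) (S : Finset ℕ) (hS : S ⊆ Bfin lam rho N) (mu : Ptn)
    (hmu : ∀ i, mu.part i
      = if i ∈ S ∨ lam.part i < rho.part i then rho.part i - 1 else rho.part i) :
    skewSize (inter lam rho) mu = S.card := by
  apply finsum_indicator
  intro i
  have hU : (inter lam rho).part i = min (lam.part i) (rho.part i) := rfl
  have h1 := hF.1 i
  rw [hU, hmu i]
  by_cases hiS : i ∈ S
  · have hm := (Finset.mem_filter.1 (hS hiS)).2
    rw [if_pos (Or.inl hiS), if_pos hiS, min_eq_right hm.1]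
    omega
  · rw [if_neg hiS]
    by_cases hlt : lam.part i < rho.part i
    · rw [if_pos (Or.inr hlt), min_eq_left (le_of_lt hlt)]
      omega
    · rw [if_neg (by tauto), min_eq_right (by omega)]
      omega

/-- The set of free positions where `μ` takes the smaller value. -/
def TOf (mu : Ptn) : Finset ℕ :=
  (Finset.range (N + 1)).filter fun i =>
    rho.part i ≤ lam.part i ∧ mu.part i + 1 = rho.part i

theorem TOf_subset (hrN : ∀ i, N ≤ i → rho.part i = 0) (mu : Ptn)
    (hH : HStrip mu lam) (hV : VStrip mu rho) :
    TOf lam rho N mu ⊆ Bfin lam rho N := by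
  intro i hi
  rw [TOf, Finset.mem_filter] at hi
  rw [Bfin, Finset.mem_filter]
  have h1 := hH.2 i
  have h2 := hi.2.2
  exact ⟨hi.1, hi.2.1, by omega⟩

theorem mu_part_eq (hrN : ∀ i, N ≤ i → rho.part i = 0) (mu : Ptn)
    (hH : HStrip mu lam) (hV : VStrip mu rho) (i : ℕ) :
    mu.part i = if i ∈ TOf lam rho N mu ∨ lam.part i < rho.part i
      then rho.part i - 1 else rho.part i := by
  have hh1 := hH.1 i
  have hv1 := hV.1 i
  have hv2 := hV.2 i
  by_cases hlt : lam.part i < rho.part i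
  · rw [if_pos (Or.inr hlt)]; omega
  · by_cases hp : mu.part i + 1 = rho.part i
    · have hiN : i < N + 1 := by
        by_contra hc
        have := hrN i (by omega)
        omega
      have hiT : i ∈ TOf lam rho N mu := by
        rw [TOf, Finset.mem_filter, Finset.mem_range]
        exact ⟨hiN, by omega, hp⟩
      rw [if_pos (Or.inl hiT)]; omega
    · have hiT : i ∉ TOf lam rho N mu := by
        rw [TOf, Finset.mem_filter]
        tauto
      rw [if_neg (by tauto)]; omega

theorem mu_count (hF : Feas lam rho) (hrN : ∀ i, N ≤ i → rho.part i = 0)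
    (p : ℕ → Prop) :
    Nat.card {mu : Ptn // HStrip mu lam ∧ VStrip mu rho ∧ p (skewSize (inter lam rho) mu)}
      = Nat.card {S : Finset ℕ // S ⊆ Bfin lam rho N ∧ p S.card} := by
  apply Nat.card_congr
  refine ⟨fun mu => ⟨TOf lam rho N mu.1,
      TOf_subset lam rho N hrN mu.1 mu.2.1 mu.2.2.1, ?_⟩,
    fun S => ⟨muOf lam rho N hF S.1 S.2.1,
      (muOf_strips lam rho N hF S.1 S.2.1).1,
      (muOf_strips lam rho N hF S.1 S.2.1).2, ?_⟩, ?_, ?_⟩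
  · have hsz := mu_size lam rho N hF (TOf lam rho N mu.1)
      (TOf_subset lam rho N hrN mu.1 mu.2.1 mu.2.2.1) mu.1
      (mu_part_eq lam rho N hrN mu.1 mu.2.1 mu.2.2.1)
    rw [← hsz]
    exact mu.2.2.2
  · have hsz := mu_size lam rho N hF S.1 S.2.1 _
      (muOf_part lam rho N hF S.1 S.2.1)
    rw [hsz]
    exact S.2.2
  · rintro ⟨mu, hmu⟩
    apply Subtype.ext
    apply ptn_ext
    intro i
    rw [muOf_part]
    exact (mu_part_eq lam rho N hrN mu hmu.1 hmu.2.1 i).symm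
  · rintro ⟨S, hS⟩
    apply Subtype.ext
    show TOf lam rho N (muOf lam rho N hF S hS.1) = S
    ext i
    rw [TOf, Finset.mem_filter, Finset.mem_range]
    constructor
    · rintro ⟨hiN, hrl, hpart⟩
      rw [muOf_part] at hpart
      by_cases hiS : i ∈ S
      · exact hiS
      · exfalso
        rcases (em (lam.part i < rho.part i)) with hlt | hlt
        · omega
        · rw [if_neg (by tauto)] at hpart
          omega
    · intro hiS
      have hm := Finset.mem_filter.1 (hS.1 hiS)
      have hB := hm.2
      refine ⟨Finset.mem_range.1 hm.1, hB.1, ?_⟩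
      rw [muOf_part, if_pos (Or.inl hiS)]
      omega

end MuSide

end UpDownAux


open Ptn in
/-- For any partitions `lam`, `rho` and `k ≥ 0`, the number of partitions `ν`
with `lam ≺' ν`, `rho ≺ ν` and `|ν/(lam ∪ rho)| = k` equals the number of
partitions `μ` with `μ ≺ lam`, `μ ≺' rho` and `|(lam ∩ rho)/μ| = k`, plus the
number of such `μ` with `|(lam ∩ rho)/μ| = k - 1`. -/
theorem up_dualdown_commutation_count (lam rho : Ptn) (k : ℕ) :
    Nat.card {ν : Ptn // VStrip lam ν ∧ HStrip rho ν ∧ skewSize ν (union lam rho) = k} =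
      Nat.card {mu : Ptn // HStrip mu lam ∧ VStrip mu rho ∧
          skewSize (inter lam rho) mu = k} +
      Nat.card {mu : Ptn // HStrip mu lam ∧ VStrip mu rho ∧
          skewSize (inter lam rho) mu + 1 = k} := by
  classical
  obtain ⟨Nr, hNr⟩ := rho.fin
  obtain ⟨Nl, hNl⟩ := lam.fin
  set N := max Nr Nl with hN
  have hrN : ∀ i, N ≤ i → rho.part i = 0 := fun i hi => hNr i (le_trans (le_max_left _ _) hi)
  have hlN : ∀ i, N ≤ i → lam.part i = 0 := fun i hi => hNl i (le_trans (le_max_right _ _) hi)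
  by_cases hF : UpDownAux.Feas lam rho
  · rw [UpDownAux.nu_count lam rho N hF hrN hlN (· = k),
      UpDownAux.mu_count lam rho N hF hrN (· = k),
      UpDownAux.mu_count lam rho N hF hrN (· + 1 = k),
      UpDownAux.card_subsets, UpDownAux.card_subsets,
      UpDownAux.card_Afin lam rho N hrN]
    cases k with
    | zero =>
      have he : IsEmpty {S : Finset ℕ // S ⊆ UpDownAux.Bfin lam rho N ∧ S.card + 1 = 0} :=
        ⟨fun S => by omega⟩
      rw [Nat.card_of_isEmpty]
      simp
    | succ k =>
      have : Nat.card {S : Finset ℕ // S ⊆ UpDownAux.Bfin lam rho N ∧ S.card + 1 = k + 1}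
          = Nat.card {S : Finset ℕ // S ⊆ UpDownAux.Bfin lam rho N ∧ S.card = k} :=
        Nat.card_congr (Equiv.subtypeEquivRight fun S => and_congr_right fun _ => by omega)
      rw [this, UpDownAux.card_subsets, Nat.choose_succ_succ']
      omega
  · have hnF : (∃ i, lam.part i + 1 < rho.part i) ∨ ∃ i, rho.part i < lam.part (i + 1) := by
      rw [UpDownAux.Feas] at hF
      push_neg at hF
      by_cases h1 : ∀ i, rho.part i ≤ lam.part i + 1
      · exact Or.inr (by obtain ⟨i, hi⟩ := hF h1; exact ⟨i, hi⟩)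
      · push_neg at h1
        exact Or.inl (by obtain ⟨i, hi⟩ := h1; exact ⟨i, hi⟩)
    have e1 : IsEmpty {ν : Ptn // VStrip lam ν ∧ HStrip rho ν ∧
        skewSize ν (union lam rho) = k} := by
      constructor
      rintro ⟨nu, hV, hH, -⟩
      rcases hnF with ⟨i, hi⟩ | ⟨i, hi⟩
      · have := hH.1 i; have := hV.2 i; omega
      · have := hV.1 (i + 1); have := hH.2 i; omega
    have e2 : ∀ k' : ℕ, IsEmpty {mu : Ptn // HStrip mu lam ∧ VStrip mu rho ∧
        skewSize (inter lam rho) mu = k'} := by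
      intro k'
      constructor
      rintro ⟨mu, hH, hV, -⟩
      rcases hnF with ⟨i, hi⟩ | ⟨i, hi⟩
      · have := hV.2 i; have := hH.1 i; omega
      · have := hH.2 i; have := hV.1 i; omega
    have e3 : IsEmpty {mu : Ptn // HStrip mu lam ∧ VStrip mu rho ∧
        skewSize (inter lam rho) mu + 1 = k} := by
      constructor
      rintro ⟨mu, hH, hV, -⟩
      rcases hnF with ⟨i, hi⟩ | ⟨i, hi⟩
      · have := hV.2 i; have := hH.1 i; omega
      · have := hH.2 i; have := hV.1 i; omega
    rw [@Nat.card_of_isEmpty _ e1, @Nat.card_of_isEmpty _ (e2 k), @Nat.card_of_isEmpty _ e3]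
end

section
/- The up operator and dual down operator satisfy the commutation relation D*_y ∘ U_x = (1+xy) · U_x ∘ D*_y as operators on formal power series with partition coefficients. -/
namespace Ptn

/-- `Y⟦x,y⟧`: formal power series in two variables whose coefficients are
finite formal `ℚ`-linear combinations of partitions.  The variable `x` is
variable `0` and `y` is variable `1`. -/
def YSeries : Type := (Fin 2 →₀ ℕ) → (Ptn →₀ ℚ)

/-- The degree-`k` piece of the up operator on finite formal sums of
partitions: `λ ↦ Σ_{ν ≻ λ, |ν/λ| = k} ν`. -/
noncomputable def upStep (k : ℕ) (c : Ptn →₀ ℚ) : Ptn →₀ ℚ :=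
  c.sum fun lam a =>
    a • ∑ᶠ ν ∈ {ν : Ptn | HStrip lam ν ∧ skewSize ν lam = k}, Finsupp.single ν (1 : ℚ)

/-- The degree-`k` piece of the down operator:
`λ ↦ Σ_{μ ≺ λ, |λ/μ| = k} μ`. -/
noncomputable def downStep (k : ℕ) (c : Ptn →₀ ℚ) : Ptn →₀ ℚ :=
  c.sum fun lam a =>
    a • ∑ᶠ mu ∈ {mu : Ptn | HStrip mu lam ∧ skewSize lam mu = k}, Finsupp.single mu (1 : ℚ)

/-- The degree-`k` piece of the dual down operator:
`λ ↦ Σ_{μ ≺' λ, |λ/μ| = k} μ`. -/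
noncomputable def dualDownStep (k : ℕ) (c : Ptn →₀ ℚ) : Ptn →₀ ℚ :=
  c.sum fun lam a =>
    a • ∑ᶠ mu ∈ {mu : Ptn | VStrip mu lam ∧ skewSize lam mu = k}, Finsupp.single mu (1 : ℚ)

/-- The up operator `U_x` on `Y⟦x,y⟧` (its coefficient at a monomial `d` is
obtained by convolving in the `x`-variable). -/
noncomputable def Uop (F : YSeries) : YSeries :=
  fun d => ∑ k ∈ Finset.range (d 0 + 1), upStep k (F (d - Finsupp.single 0 k))

/-- The down operator `D_y` on `Y⟦x,y⟧`. -/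
noncomputable def Dop (F : YSeries) : YSeries :=
  fun d => ∑ k ∈ Finset.range (d 1 + 1), downStep k (F (d - Finsupp.single 1 k))

/-- The dual down operator `D*_y` on `Y⟦x,y⟧`. -/
noncomputable def DualDop (F : YSeries) : YSeries :=
  fun d => ∑ k ∈ Finset.range (d 1 + 1), dualDownStep k (F (d - Finsupp.single 1 k))

/-- Multiplication of an element of `Y⟦x,y⟧` by a scalar formal power series
in `x, y`, defined by convolution of coefficients. -/
noncomputable def smulSeries (phi : MvPowerSeries (Fin 2) ℚ) (F : YSeries) : YSeries :=
  fun d => ∑ p ∈ Finset.HasAntidiagonal.antidiagonal d, MvPowerSeries.coeff p.1 phi • F p.2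

end Ptn

/-!
Both sides are computed coefficientwise, which reduces the theorem to the identity
`D*_{j+1} U_{k+1} = U_{k+1} D*_{j+1} + U_k D*_j` between the homogeneous pieces of the
operators (together with `U_0 = D*_0 = id`). Fix `λ` and `μ`. A partition `ν` with `ν/λ` a
horizontal strip and `ν/μ` a vertical strip has `max(λᵢ, μᵢ) ≤ νᵢ ≤ max(λᵢ, μᵢ) + 1`, the upper
value being possible exactly in a finite set `I` of rows; dually a partition `ρ` with `λ/ρ`
vertical and `μ/ρ` horizontal has `min(λᵢ, μᵢ) - 1 ≤ ρᵢ ≤ min(λᵢ, μᵢ)`, with free rows `J`.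
So `ν` and `ρ` are parametrized by subsets of `I` and `J`, and both strip sizes grow by the size
of the subset: the generating functions are `x^a y^b (1 + xy)^|I|` and `x^a y^b (1 + xy)^|J|`.
A telescoping count along the rows gives `|I| = |J| + 1`, whence the factor `1 + xy`.
-/

open Finset

namespace Ptn

theorem ext {a b : Ptn} (h : ∀ i, a.part i = b.part i) : a = b := by
  cases a; cases b; congr; exact funext h

theorem exists_common_bound (a b : Ptn) :
    ∃ N, ∀ i, N ≤ i → a.part i = 0 ∧ b.part i = 0 := by
  obtain ⟨N, hN⟩ := a.fin
  obtain ⟨M, hM⟩ := b.fin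
  exact ⟨max N M, fun i hi => ⟨hN i (le_of_max_le_left hi), hM i (le_of_max_le_right hi)⟩⟩

theorem skewSize_eq_sum (lam mu : Ptn) {N : ℕ} (h : ∀ i, N ≤ i → lam.part i = 0) :
    skewSize lam mu = ∑ i ∈ range N, (lam.part i - mu.part i) := by
  refine finsum_eq_sum_of_support_subset _ fun i hi => ?_
  by_contra hiN
  simp_all

theorem skewSize_eq_zero_iff {lam mu : Ptn} (h : ∀ i, mu.part i ≤ lam.part i) :
    skewSize lam mu = 0 ↔ lam = mu := by
  obtain ⟨N, hN⟩ := lam.fin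
  rw [skewSize_eq_sum lam mu hN, sum_eq_zero_iff]
  refine ⟨fun h0 => ext fun i => ?_, by rintro rfl; simp⟩
  by_cases hi : i < N
  · have := h0 i (mem_range.mpr hi); have := h i; omega
  · have := hN i (not_lt.mp hi); have := h i; omega

theorem skewSize_eq_add_card {a b c d : Ptn} {T : Finset ℕ}
    (h : ∀ i, a.part i - b.part i = c.part i - d.part i + if i ∈ T then 1 else 0) :
    skewSize a b = skewSize c d + #T := by
  obtain ⟨N, hN⟩ := exists_common_bound a c
  have hT : T ⊆ range N := fun i hi => mem_range.mpr <| by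
    by_contra hiN
    have := h i
    rw [if_pos hi, (hN i (not_lt.mp hiN)).1] at this
    omega
  rw [skewSize_eq_sum a b fun i hi => (hN i hi).1, skewSize_eq_sum c d fun i hi => (hN i hi).2,
    sum_congr rfl fun i _ => h i, sum_add_distrib, sum_boole, filter_mem_eq_inter,
    inter_eq_right.mpr hT, Nat.cast_id]

theorem finite_setOf_forall_part_le (g : ℕ → ℕ) {N : ℕ} (hg : ∀ i, N ≤ i → g i = 0) :
    {nu : Ptn | ∀ i, nu.part i ≤ g i}.Finite := by
  refine Set.Finite.of_finite_image (f := fun nu (i : Fin N) => nu.part i) ?_ ?_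
  · refine (Set.Finite.pi' fun i : Fin N => Set.finite_Iic (g i)).subset ?_
    rintro _ ⟨nu, hnu, rfl⟩ i
    exact hnu i
  · intro a ha b hb hab
    refine ext fun i => ?_
    by_cases hi : i < N
    · exact congrFun hab ⟨i, hi⟩
    · have := hg i (not_lt.mp hi); have := ha i; have := hb i; omega

end Ptn

section RelOp

variable (R : Type*) [Semiring R] {α : Type*}

-- `∑ᶠ` is `0` when `{b | r a b}` is infinite, hence the finiteness hypotheses below.
noncomputable def relOp (r : α → α → Prop) : (α →₀ R) →ₗ[R] (α →₀ R) :=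
  Finsupp.linearCombination R fun a => ∑ᶠ b ∈ {b | r a b}, Finsupp.single b 1

variable {R}

theorem relOp_single {r : α → α → Prop} {a : α} (hr : {b | r a b}.Finite) :
    relOp R r (Finsupp.single a 1) = ∑ b ∈ hr.toFinset, Finsupp.single b 1 := by
  rw [relOp, Finsupp.linearCombination_single, one_smul, finsum_mem_eq_finite_toFinset_sum _ hr]

theorem relOp_relOp_single_apply {r s : α → α → Prop} {a : α} (hr : {b | r a b}.Finite)
    (hs : ∀ b, {c | s b c}.Finite) (c : α) :
    relOp R s (relOp R r (Finsupp.single a 1)) c = {b | r a b ∧ s b c}.ncard := by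
  classical
  simp only [relOp_single hr, map_sum, relOp_single (hs _), Finsupp.finsetSum_apply,
    Finsupp.single_apply, sum_ite_eq', Set.Finite.mem_toFinset, Set.mem_ofPred_eq, sum_boole]
  rw [← Set.ncard_coe_finset]
  congr 2
  ext b
  simp

theorem relOp_eq_id {r : α → α → Prop} (h : ∀ a, {b | r a b} = {a}) :
    relOp R r = LinearMap.id := by
  ext a b
  simp [relOp, h]

end RelOp

namespace Ptn

def upRel (k : ℕ) (lam nu : Ptn) : Prop := HStrip lam nu ∧ skewSize nu lam = k

def dualDownRel (j : ℕ) (lam mu : Ptn) : Prop := VStrip mu lam ∧ skewSize lam mu = j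

theorem upStep_eq_relOp (k : ℕ) : upStep k = relOp ℚ (upRel k) := rfl

theorem dualDownStep_eq_relOp (j : ℕ) : dualDownStep j = relOp ℚ (dualDownRel j) := rfl

theorem finite_setOf_upRel (k : ℕ) (lam : Ptn) : {nu | upRel k lam nu}.Finite := by
  obtain ⟨N, hN⟩ := lam.fin
  refine (finite_setOf_forall_part_le (fun i => if i ≤ N then lam.part 0 + k else 0)
    (N := N + 1) fun i hi => if_neg (by omega)).subset fun nu ⟨hstrip, hsize⟩ i => ?_
  obtain ⟨M, hM⟩ := nu.fin
  have h0 : nu.part 0 - lam.part 0 ≤ k := by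
    rw [← hsize, skewSize_eq_sum nu lam (N := M + 1) fun i hi => hM i (by omega)]
    exact single_le_sum (f := fun i => nu.part i - lam.part i) (fun _ _ => Nat.zero_le _)
      (mem_range.mpr (Nat.succ_pos M))
  have := nu.anti (Nat.zero_le i)
  split_ifs with hi
  · omega
  · obtain ⟨i, rfl⟩ : ∃ i', i = i' + 1 := ⟨i - 1, by omega⟩
    have := hstrip.2 i
    have := hN i (by omega)
    omega

theorem finite_setOf_dualDownRel (j : ℕ) (lam : Ptn) : {mu | dualDownRel j lam mu}.Finite := by
  obtain ⟨N, hN⟩ := lam.fin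
  exact (finite_setOf_forall_part_le lam.part hN).subset fun mu hmu => hmu.1.1

theorem setOf_upRel_zero (lam : Ptn) : {nu | upRel 0 lam nu} = {lam} := by
  ext nu
  refine ⟨fun ⟨h, h0⟩ => (skewSize_eq_zero_iff h.1).mp h0, ?_⟩
  rintro rfl
  exact ⟨⟨fun _ => le_rfl, fun i => nu.anti i.le_succ⟩,
    (skewSize_eq_zero_iff fun _ => le_rfl).mpr rfl⟩

theorem setOf_dualDownRel_zero (lam : Ptn) : {mu | dualDownRel 0 lam mu} = {lam} := by
  ext mu
  refine ⟨fun ⟨h, h0⟩ => ((skewSize_eq_zero_iff h.1).mp h0).symm, ?_⟩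
  rintro rfl
  exact ⟨⟨fun _ => le_rfl, fun _ => Nat.le_succ _⟩,
    (skewSize_eq_zero_iff fun _ => le_rfl).mpr rfl⟩

theorem relOp_upRel_zero (R : Type*) [Semiring R] : relOp R (upRel 0) = LinearMap.id :=
  relOp_eq_id setOf_upRel_zero

theorem relOp_dualDownRel_zero (R : Type*) [Semiring R] :
    relOp R (dualDownRel 0) = LinearMap.id :=
  relOp_eq_id setOf_dualDownRel_zero

end Ptn

/-- The coefficient of `x ^ k * y ^ j` in `x ^ a * y ^ b * (1 + x * y) ^ n`. -/
def stripCount (n a b k j : ℕ) : ℕ := if a ≤ k ∧ k + b = j + a then n.choose (k - a) else 0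

theorem stripCount_succ (n a b k j : ℕ) :
    stripCount (n + 1) a b (k + 1) (j + 1) =
      stripCount n a b (k + 1) (j + 1) + stripCount n a b k j := by
  unfold stripCount
  by_cases hk : a ≤ k
  · rw [Nat.sub_add_comm hk, Nat.choose_succ_succ']
    split_ifs <;> omega
  · rcases Nat.lt_or_ge (k + 1) a with h | h
    · simp [show ¬ a ≤ k + 1 by omega, hk]
    · simp [show a = k + 1 by omega]

theorem ncard_setOf_subset_add_card {ι : Type*} (F : Finset ι) (a b k j : ℕ) :
    {T : Finset ι | T ⊆ F ∧ a + #T = k ∧ b + #T = j}.ncard = stripCount #F a b k j := by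
  unfold stripCount
  split_ifs with h
  · rw [← card_powersetCard, ← Set.ncard_coe_finset]
    congr 1
    ext T
    simp only [Set.mem_ofPred_eq, mem_coe, mem_powersetCard]
    exact and_congr_right fun _ => by omega
  · convert Set.ncard_empty (Finset ι)
    ext T
    simp only [Set.mem_ofPred_eq, Set.mem_empty_iff_false, iff_false]
    rintro ⟨-, hk, hj⟩
    omega

namespace Ptn

section UpBranching

variable (lam mu : Ptn)

theorem finite_setOf_freeRowUp :
    {i | lam.part i ≤ mu.part i ∧ (i = 0 ∨ mu.part i < lam.part (i - 1))}.Finite := by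
  obtain ⟨N, hN⟩ := lam.fin
  refine (Set.finite_Iic N).subset fun i ⟨_, hi⟩ => ?_
  by_contra hiN
  rw [Set.mem_Iic, not_le] at hiN
  have := hN (i - 1) (by omega)
  omega

/-- The rows `i` in which a partition `nu` with `lam ≺ nu` and `mu ≺' nu` may exceed
`max (lam.part i) (mu.part i)` (by exactly one). -/
noncomputable def freeRowsUp : Finset ℕ := (finite_setOf_freeRowUp lam mu).toFinset

variable {lam mu} in
theorem mem_freeRowsUp {i : ℕ} :
    i ∈ freeRowsUp lam mu ↔ lam.part i ≤ mu.part i ∧ (i = 0 ∨ mu.part i < lam.part (i - 1)) :=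
  Set.Finite.mem_toFinset _

-- Intersecting with `freeRowsUp` makes `nuOf lam mu T` a partition for every `T`.
noncomputable def nuOf (T : Finset ℕ) : Ptn where
  part i := max (lam.part i) (mu.part i) + if i ∈ T ∩ freeRowsUp lam mu then 1 else 0
  anti := antitone_nat_of_succ_le fun i => by
    have := lam.anti (Nat.le_add_right i 1)
    have := mu.anti (Nat.le_add_right i 1)
    simp only [mem_inter, mem_freeRowsUp, Nat.add_sub_cancel]
    grind
  fin := by
    obtain ⟨N, hN⟩ := exists_common_bound lam mu
    refine ⟨N + 1, fun i hi => ?_⟩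
    have := hN i (by omega)
    have := hN (i - 1) (by omega)
    simp only [mem_inter, mem_freeRowsUp]
    grind

theorem nuOf_part_of_subset {T : Finset ℕ} (hT : T ⊆ freeRowsUp lam mu) (i : ℕ) :
    (nuOf lam mu T).part i = max (lam.part i) (mu.part i) + if i ∈ T then 1 else 0 := by
  simp only [nuOf, inter_eq_left.mpr hT]

theorem hStrip_nuOf (hml : ∀ i, mu.part (i + 1) ≤ lam.part i) (T : Finset ℕ) :
    HStrip lam (nuOf lam mu T) := by
  refine ⟨fun i => by simp only [nuOf]; grind, fun i => ?_⟩
  have := hml i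
  have := lam.anti (Nat.le_add_right i 1)
  simp only [nuOf, mem_inter, mem_freeRowsUp, Nat.add_sub_cancel]
  grind

theorem vStrip_nuOf (hlm : ∀ i, lam.part i ≤ mu.part i + 1) (T : Finset ℕ) :
    VStrip mu (nuOf lam mu T) := by
  refine ⟨fun i => by simp only [nuOf]; grind, fun i => ?_⟩
  have := hlm i
  simp only [nuOf, mem_inter, mem_freeRowsUp]
  grind

theorem skewSize_nuOf_left {T : Finset ℕ} (hT : T ⊆ freeRowsUp lam mu) :
    skewSize (nuOf lam mu T) lam = skewSize (union lam mu) lam + #T :=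
  skewSize_eq_add_card fun i => by
    simp only [nuOf_part_of_subset lam mu hT, union]
    grind

theorem skewSize_nuOf_right {T : Finset ℕ} (hT : T ⊆ freeRowsUp lam mu) :
    skewSize (nuOf lam mu T) mu = skewSize (union lam mu) mu + #T :=
  skewSize_eq_add_card fun i => by
    simp only [nuOf_part_of_subset lam mu hT, union]
    grind

theorem injOn_nuOf : Set.InjOn (nuOf lam mu) {T | T ⊆ freeRowsUp lam mu} := by
  intro T hT T' hT' h
  ext i
  have := congrArg (·.part i) h
  simp only [nuOf_part_of_subset lam mu hT, nuOf_part_of_subset lam mu hT'] at this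
  split_ifs at this <;> simp_all

theorem exists_eq_nuOf {nu : Ptn} (hlam : HStrip lam nu) (hmu : VStrip mu nu) :
    ∃ T ⊆ freeRowsUp lam mu, nu = nuOf lam mu T := by
  refine ⟨(freeRowsUp lam mu).filter fun i => max (lam.part i) (mu.part i) < nu.part i,
    filter_subset _ _, ext fun i => ?_⟩
  have := hlam.1 i
  have := hmu.1 i
  have := hmu.2 i
  rw [nuOf_part_of_subset lam mu (filter_subset _ _)]
  simp only [mem_filter, mem_freeRowsUp]
  rcases i with _ | i
  · grind
  · have := hlam.2 i
    simp only [Nat.add_sub_cancel]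
    grind

theorem setOf_upRel_dualDownRel_eq_image (hlm : ∀ i, lam.part i ≤ mu.part i + 1)
    (hml : ∀ i, mu.part (i + 1) ≤ lam.part i) (k j : ℕ) :
    {nu | upRel k lam nu ∧ dualDownRel j nu mu} = nuOf lam mu '' {T | T ⊆ freeRowsUp lam mu ∧
      skewSize (union lam mu) lam + #T = k ∧ skewSize (union lam mu) mu + #T = j} := by
  ext nu
  constructor
  · rintro ⟨⟨hlam, rfl⟩, hmu, rfl⟩
    obtain ⟨T, hT, rfl⟩ := exists_eq_nuOf lam mu hlam hmu
    exact ⟨T, ⟨hT, (skewSize_nuOf_left lam mu hT).symm, (skewSize_nuOf_right lam mu hT).symm⟩, rfl⟩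
  · rintro ⟨T, ⟨hT, rfl, rfl⟩, rfl⟩
    exact ⟨⟨hStrip_nuOf lam mu hml T, skewSize_nuOf_left lam mu hT⟩,
      vStrip_nuOf lam mu hlm T, skewSize_nuOf_right lam mu hT⟩

theorem ncard_setOf_upRel_dualDownRel (hlm : ∀ i, lam.part i ≤ mu.part i + 1)
    (hml : ∀ i, mu.part (i + 1) ≤ lam.part i) (k j : ℕ) :
    {nu | upRel k lam nu ∧ dualDownRel j nu mu}.ncard = stripCount #(freeRowsUp lam mu)
      (skewSize (union lam mu) lam) (skewSize (union lam mu) mu) k j := by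
  rw [setOf_upRel_dualDownRel_eq_image lam mu hlm hml,
    ((injOn_nuOf lam mu).mono fun _ hT => hT.1).ncard_image,
    ncard_setOf_subset_add_card]

end UpBranching

section DownBranching

variable (lam mu : Ptn)

theorem finite_setOf_freeRowDown :
    {i | lam.part i ≤ mu.part i ∧ mu.part (i + 1) < lam.part i}.Finite := by
  obtain ⟨N, hN⟩ := lam.fin
  refine (Set.finite_Iio N).subset fun i ⟨_, hi⟩ => ?_
  by_contra hiN
  rw [Set.mem_Iio, not_lt] at hiN
  have := hN i hiN
  omega

/-- The rows `i` in which a partition `rho` with `rho ≺' lam` and `rho ≺ mu` may fall short of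
`min (lam.part i) (mu.part i)` (by exactly one). -/
noncomputable def freeRowsDown : Finset ℕ := (finite_setOf_freeRowDown lam mu).toFinset

variable {lam mu} in
theorem mem_freeRowsDown {i : ℕ} :
    i ∈ freeRowsDown lam mu ↔ lam.part i ≤ mu.part i ∧ mu.part (i + 1) < lam.part i :=
  Set.Finite.mem_toFinset _

noncomputable def rhoOf (T : Finset ℕ) : Ptn where
  part i := min (lam.part i) (mu.part i) - if i ∈ T ∩ freeRowsDown lam mu then 1 else 0
  anti := antitone_nat_of_succ_le fun i => by
    have := lam.anti (Nat.le_add_right i 1)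
    have := mu.anti (Nat.le_add_right i 1)
    simp only [mem_inter, mem_freeRowsDown]
    grind
  fin := by
    obtain ⟨N, hN⟩ := lam.fin
    exact ⟨N, fun i hi => by simp [hN i hi]⟩

theorem rhoOf_part_of_subset {T : Finset ℕ} (hT : T ⊆ freeRowsDown lam mu) (i : ℕ) :
    (rhoOf lam mu T).part i = min (lam.part i) (mu.part i) - if i ∈ T then 1 else 0 := by
  simp only [rhoOf, inter_eq_left.mpr hT]

theorem vStrip_rhoOf (hlm : ∀ i, lam.part i ≤ mu.part i + 1) (T : Finset ℕ) :
    VStrip (rhoOf lam mu T) lam := by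
  refine ⟨fun i => by simp only [rhoOf]; grind, fun i => ?_⟩
  have := hlm i
  simp only [rhoOf, mem_inter, mem_freeRowsDown]
  grind

theorem hStrip_rhoOf (hml : ∀ i, mu.part (i + 1) ≤ lam.part i) (T : Finset ℕ) :
    HStrip (rhoOf lam mu T) mu := by
  refine ⟨fun i => by simp only [rhoOf]; grind, fun i => ?_⟩
  have := hml i
  have := mu.anti (Nat.le_add_right i 1)
  simp only [rhoOf, mem_inter, mem_freeRowsDown]
  grind

theorem skewSize_rhoOf_left {T : Finset ℕ} (hT : T ⊆ freeRowsDown lam mu) :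
    skewSize lam (rhoOf lam mu T) = skewSize (union lam mu) mu + #T :=
  skewSize_eq_add_card fun i => by
    have hfree (hi : i ∈ T) := mem_freeRowsDown.mp (hT hi)
    simp only [rhoOf_part_of_subset lam mu hT, union]
    grind

theorem skewSize_rhoOf_right {T : Finset ℕ} (hT : T ⊆ freeRowsDown lam mu) :
    skewSize mu (rhoOf lam mu T) = skewSize (union lam mu) lam + #T :=
  skewSize_eq_add_card fun i => by
    have hfree (hi : i ∈ T) := mem_freeRowsDown.mp (hT hi)
    simp only [rhoOf_part_of_subset lam mu hT, union]
    grind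

theorem injOn_rhoOf : Set.InjOn (rhoOf lam mu) {T | T ⊆ freeRowsDown lam mu} := by
  intro T hT T' hT' h
  ext i
  have hpart := congrArg (·.part i) h
  simp only [rhoOf_part_of_subset lam mu hT, rhoOf_part_of_subset lam mu hT'] at hpart
  have hfree (hi : i ∈ freeRowsDown lam mu) := mem_freeRowsDown.mp hi
  have := @hT i
  have := @hT' i
  grind

theorem exists_eq_rhoOf {rho : Ptn} (hlam : VStrip rho lam) (hmu : HStrip rho mu) :
    ∃ T ⊆ freeRowsDown lam mu, rho = rhoOf lam mu T := by
  refine ⟨(freeRowsDown lam mu).filter fun i => rho.part i < min (lam.part i) (mu.part i),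
    filter_subset _ _, ext fun i => ?_⟩
  have := hlam.1 i
  have := hlam.2 i
  have := hmu.1 i
  have := hmu.2 i
  rw [rhoOf_part_of_subset lam mu (filter_subset _ _)]
  simp only [mem_filter, mem_freeRowsDown]
  grind

theorem setOf_dualDownRel_upRel_eq_image (hlm : ∀ i, lam.part i ≤ mu.part i + 1)
    (hml : ∀ i, mu.part (i + 1) ≤ lam.part i) (j k : ℕ) :
    {rho | dualDownRel j lam rho ∧ upRel k rho mu} = rhoOf lam mu '' {T | T ⊆ freeRowsDown lam mu ∧
      skewSize (union lam mu) lam + #T = k ∧ skewSize (union lam mu) mu + #T = j} := by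
  ext rho
  constructor
  · rintro ⟨⟨hlam, rfl⟩, hmu, rfl⟩
    obtain ⟨T, hT, rfl⟩ := exists_eq_rhoOf lam mu hlam hmu
    exact ⟨T, ⟨hT, (skewSize_rhoOf_right lam mu hT).symm, (skewSize_rhoOf_left lam mu hT).symm⟩,
      rfl⟩
  · rintro ⟨T, ⟨hT, rfl, rfl⟩, rfl⟩
    exact ⟨⟨vStrip_rhoOf lam mu hlm T, skewSize_rhoOf_left lam mu hT⟩,
      hStrip_rhoOf lam mu hml T, skewSize_rhoOf_right lam mu hT⟩

theorem ncard_setOf_dualDownRel_upRel (hlm : ∀ i, lam.part i ≤ mu.part i + 1)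
    (hml : ∀ i, mu.part (i + 1) ≤ lam.part i) (j k : ℕ) :
    {rho | dualDownRel j lam rho ∧ upRel k rho mu}.ncard = stripCount #(freeRowsDown lam mu)
      (skewSize (union lam mu) lam) (skewSize (union lam mu) mu) k j := by
  rw [setOf_dualDownRel_upRel_eq_image lam mu hlm hml,
    ((injOn_rhoOf lam mu).mono fun _ hT => hT.1).ncard_image, ncard_setOf_subset_add_card]

end DownBranching

theorem card_freeRowsUp {lam mu : Ptn} (hml : ∀ i, mu.part (i + 1) ≤ lam.part i) :
    #(freeRowsUp lam mu) = #(freeRowsDown lam mu) + 1 := by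
  obtain ⟨N, hN⟩ := exists_common_bound lam mu
  have hstep (i : ℕ) : (if lam.part i ≤ mu.part i then 1 else 0) +
      (if i + 1 ∈ freeRowsUp lam mu then 1 else 0) =
      (if i ∈ freeRowsDown lam mu then 1 else 0) +
      if lam.part (i + 1) ≤ mu.part (i + 1) then 1 else 0 := by
    have := hml i
    have := lam.anti (Nat.le_add_right i 1)
    have := mu.anti (Nat.le_add_right i 1)
    simp only [mem_freeRowsUp, mem_freeRowsDown, Nat.add_sub_cancel]
    grind
  have htele (n : ℕ) : ∑ i ∈ range (n + 1), (if i ∈ freeRowsUp lam mu then 1 else 0) =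
      ∑ i ∈ range n, (if i ∈ freeRowsDown lam mu then 1 else 0) +
      if lam.part n ≤ mu.part n then 1 else 0 := by
    induction n with
    | zero =>
      rw [sum_range_one, range_zero, sum_empty, zero_add]
      simp [mem_freeRowsUp]
    | succ n ih => rw [sum_range_succ, ih, sum_range_succ, add_assoc, hstep, add_assoc]
  have hup : freeRowsUp lam mu ⊆ range (N + 1) := fun i hi => by
    have := hN (i - 1)
    rw [mem_freeRowsUp] at hi
    rw [mem_range]
    omega
  have hdown : freeRowsDown lam mu ⊆ range N := fun i hi => by
    have := hN i
    rw [mem_freeRowsDown] at hi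
    rw [mem_range]
    omega
  simpa only [sum_boole, Nat.cast_id, filter_mem_eq_inter, inter_eq_right.mpr hup,
    inter_eq_right.mpr hdown, (hN N le_rfl).1, (hN N le_rfl).2, le_refl, if_true] using htele N

theorem ncard_setOf_upRel_dualDownRel_succ (lam mu : Ptn) (k j : ℕ) :
    {nu | upRel (k + 1) lam nu ∧ dualDownRel (j + 1) nu mu}.ncard =
      {rho | dualDownRel (j + 1) lam rho ∧ upRel (k + 1) rho mu}.ncard +
        {rho | dualDownRel j lam rho ∧ upRel k rho mu}.ncard := by
  by_cases hinter : (∀ i, lam.part i ≤ mu.part i + 1) ∧ ∀ i, mu.part (i + 1) ≤ lam.part i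
  · obtain ⟨hlm, hml⟩ := hinter
    rw [ncard_setOf_upRel_dualDownRel lam mu hlm hml, ncard_setOf_dualDownRel_upRel lam mu hlm hml,
      ncard_setOf_dualDownRel_upRel lam mu hlm hml, card_freeRowsUp hml, stripCount_succ]
  · have hnu : {nu | upRel (k + 1) lam nu ∧ dualDownRel (j + 1) nu mu} = ∅ :=
      Set.eq_empty_of_forall_notMem fun nu ⟨⟨hlam, _⟩, hmu, _⟩ => hinter
        ⟨fun i => (hlam.1 i).trans (hmu.2 i), fun i => (hmu.1 (i + 1)).trans (hlam.2 i)⟩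
    have hrho (j k : ℕ) : {rho | dualDownRel j lam rho ∧ upRel k rho mu} = ∅ :=
      Set.eq_empty_of_forall_notMem fun rho ⟨⟨hlam, _⟩, hmu, _⟩ => hinter
        ⟨fun i => (hlam.2 i).trans (Nat.add_le_add_right (hmu.1 i) 1),
          fun i => (hmu.2 i).trans (hlam.1 i)⟩
    simp [hnu, hrho]

theorem relOp_dualDownRel_comp_relOp_upRel (R : Type*) [Semiring R] (j k : ℕ) :
    relOp R (dualDownRel (j + 1)) ∘ₗ relOp R (upRel (k + 1)) =
      relOp R (upRel (k + 1)) ∘ₗ relOp R (dualDownRel (j + 1)) +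
        relOp R (upRel k) ∘ₗ relOp R (dualDownRel j) := by
  ext lam mu
  simp only [LinearMap.comp_apply, LinearMap.add_apply, Finsupp.lsingle_apply, Finsupp.add_apply,
    relOp_relOp_single_apply (finite_setOf_upRel _ _) (finite_setOf_dualDownRel _),
    relOp_relOp_single_apply (finite_setOf_dualDownRel _ _) (finite_setOf_upRel _),
    ncard_setOf_upRel_dualDownRel_succ, Nat.cast_add]

end Ptn

theorem Finset.sum_range_succ_sum_range_succ_eq_add {M : Type*} [AddCommMonoid M]
    {f g h : ℕ → ℕ → M} (n m : ℕ) (hf₀ : ∀ k, f 0 k = g 0 k) (hf₀' : ∀ j, f j 0 = g j 0)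
    (hf : ∀ j k, f (j + 1) (k + 1) = g (j + 1) (k + 1) + h j k) :
    ∑ j ∈ range (n + 1), ∑ k ∈ range (m + 1), f j k =
      ∑ j ∈ range (n + 1), ∑ k ∈ range (m + 1), g j k + ∑ j ∈ range n, ∑ k ∈ range m, h j k := by
  simp only [sum_range_succ' _ n, sum_range_succ' _ m, hf₀, hf₀', hf, sum_add_distrib]
  abel

namespace Ptn

open MvPowerSeries

theorem DualDop_Uop_apply (F : YSeries) (d : Fin 2 →₀ ℕ) :
    DualDop (Uop F) d = ∑ j ∈ range (d 1 + 1), ∑ k ∈ range (d 0 + 1),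
      relOp ℚ (dualDownRel j) (relOp ℚ (upRel k)
        (F (d - Finsupp.single 0 k - Finsupp.single 1 j))) := by
  simp only [DualDop, Uop, upStep_eq_relOp, dualDownStep_eq_relOp, map_sum, Finsupp.tsub_apply,
    Finsupp.single_apply, tsub_right_comm (b := Finsupp.single (1 : Fin 2) _)]
  simp

theorem Uop_DualDop_apply (F : YSeries) (d : Fin 2 →₀ ℕ) :
    Uop (DualDop F) d = ∑ j ∈ range (d 1 + 1), ∑ k ∈ range (d 0 + 1),
      relOp ℚ (upRel k) (relOp ℚ (dualDownRel j)
        (F (d - Finsupp.single 0 k - Finsupp.single 1 j))) := by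
  rw [sum_comm]
  simp only [DualDop, Uop, upStep_eq_relOp, dualDownStep_eq_relOp, map_sum, Finsupp.tsub_apply,
    Finsupp.single_apply]
  simp

theorem smulSeries_add_apply (φ ψ : MvPowerSeries (Fin 2) ℚ) (G : YSeries) (d : Fin 2 →₀ ℕ) :
    smulSeries (φ + ψ) G d = smulSeries φ G d + smulSeries ψ G d := by
  simp only [smulSeries, map_add, add_smul, sum_add_distrib]

theorem smulSeries_monomial_apply (e : Fin 2 →₀ ℕ) (a : ℚ) (G : YSeries) (d : Fin 2 →₀ ℕ) :
    smulSeries (monomial e a) G d = if e ≤ d then a • G (d - e) else 0 := by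
  change (Fin 2 →₀ ℕ) → Ptn →₀ ℚ at G
  simp only [smulSeries, coeff_monomial, ite_smul, zero_smul, ← sum_filter]
  rw [HasAntidiagonal.filter_fst_eq_antidiagonal d e]
  split_ifs <;> simp

theorem smulSeries_one_apply (G : YSeries) (d : Fin 2 →₀ ℕ) : smulSeries 1 G d = G d := by
  simpa using smulSeries_monomial_apply 0 1 G d

theorem smulSeries_X_mul_X_Uop_DualDop_apply (F : YSeries) (d : Fin 2 →₀ ℕ) :
    smulSeries (X 0 * X 1) (Uop (DualDop F)) d = ∑ j ∈ range (d 1), ∑ k ∈ range (d 0),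
      relOp ℚ (upRel k) (relOp ℚ (dualDownRel j)
        (F (d - Finsupp.single 0 (k + 1) - Finsupp.single 1 (j + 1)))) := by
  rw [X, X, monomial_mul_monomial, one_mul]
  refine (smulSeries_monomial_apply _ _ _ _).trans ?_
  have hle : Finsupp.single 0 1 + Finsupp.single 1 1 ≤ d ↔ 1 ≤ d 0 ∧ 1 ≤ d 1 := by
    simp [Finsupp.le_def, Fin.forall_fin_two]
  split_ifs with h
  · obtain ⟨h₀, h₁⟩ := hle.mp h
    refine (one_smul ℚ _).trans <| (Uop_DualDop_apply F _).trans ?_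
    change (Fin 2 →₀ ℕ) → Ptn →₀ ℚ at F
    have hd (i : Fin 2) :
        (d - (Finsupp.single 0 1 + Finsupp.single 1 1) : Fin 2 →₀ ℕ) i + 1 = d i := by
      fin_cases i <;> simp only [Fin.isValue, Fin.zero_eta, Fin.mk_one, Finsupp.coe_tsub,
        Finsupp.coe_add, Pi.sub_apply, Pi.add_apply, Finsupp.single_eq_same,
        Finsupp.single_eq_of_ne, ne_eq, zero_ne_one, one_ne_zero, not_false_eq_true] <;> omega
    simp only [hd]
    refine sum_congr rfl fun j _ => sum_congr rfl fun k _ => ?_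
    congr 3
    ext i
    fin_cases i <;> simp only [Fin.isValue, Fin.zero_eta, Fin.mk_one, Finsupp.coe_tsub,
      Finsupp.coe_add, Pi.sub_apply, Pi.add_apply, Finsupp.single_eq_same,
      Finsupp.single_eq_of_ne, ne_eq, zero_ne_one, one_ne_zero, not_false_eq_true] <;> omega
  · rw [hle, not_and_or, not_le, not_le, Nat.lt_one_iff, Nat.lt_one_iff] at h
    rcases h with h₀ | h₁ <;> simp [*]

end Ptn

open Ptn in
/-- The commutation relation `D*_y ∘ U_x = (1 + xy) · U_x ∘ D*_y` for the up
and dual down operators on `Y⟦x,y⟧`. -/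
theorem up_dual_down_commutation (F : YSeries) :
    DualDop (Uop F) =
      smulSeries ((1 + MvPowerSeries.X 0 * MvPowerSeries.X 1 :
        MvPowerSeries (Fin 2) ℚ)) (Uop (DualDop F)) := by
  funext d
  rw [smulSeries_add_apply, smulSeries_one_apply, smulSeries_X_mul_X_Uop_DualDop_apply,
    DualDop_Uop_apply, Uop_DualDop_apply]
  refine Finset.sum_range_succ_sum_range_succ_eq_add _ _ (fun k => ?_) (fun j => ?_) fun j k => ?_
  · simp [relOp_dualDownRel_zero]
  · simp [relOp_upRel_zero]
  · exact LinearMap.congr_fun (relOp_dualDownRel_comp_relOp_upRel ℚ j k) _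
end

section
/- For every partition λ and non-negative integer k, the number of partitions ν with even parts such that λ ≺ ν and |ν/λ| = k equals the sum over i with 0 ≤ i ≤ ⌊k/2⌋ of the number of partitions μ with even parts such that μ ≺ λ and |λ/μ| = k − 2i. Equivalently, π_{P_e} ∘ U_x = (1/(1−x²)) · π_{P_e} ∘ D_x. -/
namespace PE
open Ptn

theorem Ptn.ext' {a b : Ptn} (h : ∀ i, a.part i = b.part i) : a = b := by
  cases a; cases b
  simp only [Ptn.mk.injEq]
  exact funext h

theorem skew_int (l m : Ptn) (hm : ∀ i, m.part i ≤ l.part i) {N : ℕ}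
    (hN : ∀ n, N ≤ n → l.part n = 0) :
    (skewSize l m : ℤ) = ∑ n ∈ Finset.range N, ((l.part n : ℤ) - m.part n) := by
  have h1 : skewSize l m = ∑ n ∈ Finset.range N, (l.part n - m.part n) := by
    apply finsum_eq_sum_of_support_subset
    intro n hn
    simp only [Function.mem_support, ne_eq] at hn
    simp only [Finset.coe_range, Set.mem_Iio]
    by_contra hc
    exact hn (by have := hN n (not_lt.mp hc); omega)
  rw [h1, Nat.cast_sum]
  exact Finset.sum_congr rfl fun n _ => by
    have := hm n; push_cast [Nat.cast_sub this]; ring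

theorem sum_rel (lam mu nu : Ptn) {N : ℕ}
    (hrel : ∀ n, nu.part (n+1) + mu.part n + lam.part n % 2
      = lam.part n + lam.part (n+1) + lam.part (n+1) % 2)
    (hmle : ∀ n, mu.part n ≤ lam.part n) (hlle : ∀ n, lam.part n ≤ nu.part n)
    (hN : ∀ n, N ≤ n → lam.part n = 0) :
    (skewSize nu lam : ℤ) =
      ((nu.part 0 : ℤ) - lam.part 0 - lam.part 0 % 2) + skewSize lam mu := by
  have hnu0 : ∀ n, N + 1 ≤ n → nu.part n = 0 := by
    intro n hn
    obtain ⟨m, rfl⟩ : ∃ m, n = m + 1 := ⟨n - 1, by omega⟩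
    have h1 := hrel m
    have h2 := hN m (by omega)
    have h3 := hN (m+1) (by omega)
    omega
  rw [skew_int nu lam hlle hnu0, skew_int lam mu hmle hN]
  rw [Finset.sum_range_succ']
  have key : ∀ n ∈ Finset.range N, ((nu.part (n+1) : ℤ) - lam.part (n+1))
      = (((lam.part n : ℤ) - mu.part n)
        + (((lam.part (n+1) % 2 : ℕ) : ℤ) - ((lam.part n % 2 : ℕ) : ℤ))) := by
    intro n _
    have h1 := hrel n
    have h2 : ((nu.part (n+1) : ℤ)) + mu.part n + ((lam.part n % 2 : ℕ) : ℤ)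
        = lam.part n + lam.part (n+1) + ((lam.part (n+1) % 2 : ℕ) : ℤ) := by
      exact_mod_cast congrArg (Nat.cast : ℕ → ℤ) h1
    linarith
  rw [Finset.sum_congr rfl key, Finset.sum_add_distrib,
    Finset.sum_range_sub (fun n => ((lam.part n % 2 : ℕ) : ℤ))]
  have : lam.part N % 2 = 0 := by rw [hN N le_rfl]
  rw [this]
  push_cast
  ring

/-- The reflected partition `μ` built from `ν` with `λ ≺ ν`. -/
def muOf (lam nu : Ptn) (he : ∀ n, Even (nu.part n)) (hs : HStrip lam nu) : Ptn where
  part n := (lam.part n - lam.part n % 2 - nu.part (n+1))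
    + lam.part (n+1) + lam.part (n+1) % 2
  anti := by
    apply antitone_nat_of_succ_le
    intro n
    show (lam.part (n+1) - lam.part (n+1) % 2 - nu.part (n+2))
        + lam.part (n+2) + lam.part (n+2) % 2
      ≤ (lam.part n - lam.part n % 2 - nu.part (n+1))
        + lam.part (n+1) + lam.part (n+1) % 2
    have e1 : nu.part (n+1) % 2 = 0 := Nat.even_iff.mp (he (n+1))
    have e2 : nu.part (n+2) % 2 = 0 := Nat.even_iff.mp (he (n+2))
    have h1 : lam.part (n+1) ≤ nu.part (n+1) := hs.1 (n+1)
    have h2 : lam.part (n+2) ≤ nu.part (n+2) := hs.1 (n+2)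
    have h3 : nu.part (n+1) ≤ lam.part n := hs.2 n
    have h4 : nu.part (n+2) ≤ lam.part (n+1) := hs.2 (n+1)
    omega
  fin := by
    obtain ⟨N, hN⟩ := lam.fin
    refine ⟨N, fun n hn => ?_⟩
    show (lam.part n - lam.part n % 2 - nu.part (n+1))
        + lam.part (n+1) + lam.part (n+1) % 2 = 0
    have h1 := hN n hn
    have h2 := hN (n+1) (by omega)
    have h3 : nu.part (n+1) ≤ lam.part n := hs.2 n
    omega

/-- The partition `ν` built from `μ ≺ λ` and a shift `i`. -/
def nuOf (lam mu : Ptn) (i : ℕ) (he : ∀ n, Even (mu.part n)) (hs : HStrip mu lam) : Ptn where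
  part n := match n with
    | 0 => lam.part 0 + lam.part 0 % 2 + 2 * i
    | n+1 => (lam.part n - lam.part n % 2 - mu.part n)
        + lam.part (n+1) + lam.part (n+1) % 2
  anti := by
    apply antitone_nat_of_succ_le
    intro n
    match n with
    | 0 =>
      show (lam.part 0 - lam.part 0 % 2 - mu.part 0) + lam.part 1 + lam.part 1 % 2
        ≤ lam.part 0 + lam.part 0 % 2 + 2 * i
      have e1 : mu.part 0 % 2 = 0 := Nat.even_iff.mp (he 0)
      have h1 : mu.part 0 ≤ lam.part 0 := hs.1 0
      have h2 : lam.part 1 ≤ mu.part 0 := hs.2 0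
      omega
    | n+1 =>
      show (lam.part (n+1) - lam.part (n+1) % 2 - mu.part (n+1))
          + lam.part (n+2) + lam.part (n+2) % 2
        ≤ (lam.part n - lam.part n % 2 - mu.part n)
          + lam.part (n+1) + lam.part (n+1) % 2
      have e1 : mu.part n % 2 = 0 := Nat.even_iff.mp (he n)
      have e2 : mu.part (n+1) % 2 = 0 := Nat.even_iff.mp (he (n+1))
      have h1 : mu.part n ≤ lam.part n := hs.1 n
      have h2 : mu.part (n+1) ≤ lam.part (n+1) := hs.1 (n+1)
      have h3 : lam.part (n+1) ≤ mu.part n := hs.2 n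
      have h4 : lam.part (n+2) ≤ mu.part (n+1) := hs.2 (n+1)
      omega
  fin := by
    obtain ⟨N, hN⟩ := lam.fin
    refine ⟨N + 1, fun n hn => ?_⟩
    obtain ⟨m, rfl⟩ : ∃ m, n = m + 1 := ⟨n - 1, by omega⟩
    show (lam.part m - lam.part m % 2 - mu.part m)
        + lam.part (m+1) + lam.part (m+1) % 2 = 0
    have h1 := hN m (by omega)
    have h2 := hN (m+1) (by omega)
    have h3 := hs.1 m
    omega

theorem nuOf_rel (lam mu : Ptn) (i : ℕ) (he : ∀ n, Even (mu.part n))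
    (hs : HStrip mu lam) (n : ℕ) :
    (nuOf lam mu i he hs).part (n+1) + mu.part n + lam.part n % 2
      = lam.part n + lam.part (n+1) + lam.part (n+1) % 2 := by
  show (lam.part n - lam.part n % 2 - mu.part n)
      + lam.part (n+1) + lam.part (n+1) % 2 + mu.part n + lam.part n % 2 = _
  have e1 : mu.part n % 2 = 0 := Nat.even_iff.mp (he n)
  have h1 : mu.part n ≤ lam.part n := hs.1 n
  omega

theorem muOf_rel (lam nu : Ptn) (he : ∀ n, Even (nu.part n))
    (hs : HStrip lam nu) (n : ℕ) :
    nu.part (n+1) + (muOf lam nu he hs).part n + lam.part n % 2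
      = lam.part n + lam.part (n+1) + lam.part (n+1) % 2 := by
  show nu.part (n+1) + ((lam.part n - lam.part n % 2 - nu.part (n+1))
      + lam.part (n+1) + lam.part (n+1) % 2) + lam.part n % 2 = _
  have e1 : nu.part (n+1) % 2 = 0 := Nat.even_iff.mp (he (n+1))
  have h1 : nu.part (n+1) ≤ lam.part n := hs.2 n
  omega

theorem nuOf_even (lam mu : Ptn) (i : ℕ) (he : ∀ n, Even (mu.part n))
    (hs : HStrip mu lam) : ∀ n, Even ((nuOf lam mu i he hs).part n) := by
  intro n
  rw [Nat.even_iff]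
  match n with
  | 0 =>
    show (lam.part 0 + lam.part 0 % 2 + 2 * i) % 2 = 0
    omega
  | n+1 =>
    show ((lam.part n - lam.part n % 2 - mu.part n)
        + lam.part (n+1) + lam.part (n+1) % 2) % 2 = 0
    have e1 : mu.part n % 2 = 0 := Nat.even_iff.mp (he n)
    have h1 : mu.part n ≤ lam.part n := hs.1 n
    omega

theorem nuOf_hstrip (lam mu : Ptn) (i : ℕ) (he : ∀ n, Even (mu.part n))
    (hs : HStrip mu lam) : HStrip lam (nuOf lam mu i he hs) := by
  constructor
  · intro n
    match n with
    | 0 => show lam.part 0 ≤ lam.part 0 + lam.part 0 % 2 + 2 * i; omega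
    | n+1 =>
      show lam.part (n+1) ≤ (lam.part n - lam.part n % 2 - mu.part n)
          + lam.part (n+1) + lam.part (n+1) % 2
      omega
  · intro n
    show (lam.part n - lam.part n % 2 - mu.part n)
        + lam.part (n+1) + lam.part (n+1) % 2 ≤ lam.part n
    have e1 : mu.part n % 2 = 0 := Nat.even_iff.mp (he n)
    have h1 : mu.part n ≤ lam.part n := hs.1 n
    have h2 : lam.part (n+1) ≤ mu.part n := hs.2 n
    omega

theorem muOf_even (lam nu : Ptn) (he : ∀ n, Even (nu.part n))
    (hs : HStrip lam nu) : ∀ n, Even ((muOf lam nu he hs).part n) := by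
  intro n
  rw [Nat.even_iff]
  show ((lam.part n - lam.part n % 2 - nu.part (n+1))
      + lam.part (n+1) + lam.part (n+1) % 2) % 2 = 0
  have e1 : nu.part (n+1) % 2 = 0 := Nat.even_iff.mp (he (n+1))
  have h1 : nu.part (n+1) ≤ lam.part n := hs.2 n
  omega

theorem muOf_hstrip (lam nu : Ptn) (he : ∀ n, Even (nu.part n))
    (hs : HStrip lam nu) : HStrip (muOf lam nu he hs) lam := by
  constructor
  · intro n
    show (lam.part n - lam.part n % 2 - nu.part (n+1))
        + lam.part (n+1) + lam.part (n+1) % 2 ≤ lam.part n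
    have e1 : nu.part (n+1) % 2 = 0 := Nat.even_iff.mp (he (n+1))
    have h1 : nu.part (n+1) ≤ lam.part n := hs.2 n
    have h2 : lam.part (n+1) ≤ nu.part (n+1) := hs.1 (n+1)
    omega
  · intro n
    show lam.part (n+1) ≤ (lam.part n - lam.part n % 2 - nu.part (n+1))
        + lam.part (n+1) + lam.part (n+1) % 2
    omega

theorem nuOf_skew (lam mu : Ptn) (k i : ℕ) (he : ∀ n, Even (mu.part n))
    (hs : HStrip mu lam) (h2i : 2 * i ≤ k) (hsk : skewSize lam mu = k - 2 * i) :
    skewSize (nuOf lam mu i he hs) lam = k := by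
  obtain ⟨N, hN⟩ := lam.fin
  have hz := sum_rel lam mu (nuOf lam mu i he hs) (nuOf_rel lam mu i he hs)
    hs.1 (nuOf_hstrip lam mu i he hs).1 hN
  have h0 : (nuOf lam mu i he hs).part 0 = lam.part 0 + lam.part 0 % 2 + 2 * i := rfl
  rw [h0, hsk] at hz
  have : ((k - 2 * i : ℕ) : ℤ) = (k : ℤ) - 2 * i := by
    push_cast [Nat.cast_sub h2i]; ring
  rw [this] at hz
  have : (skewSize (nuOf lam mu i he hs) lam : ℤ) = (k : ℤ) := by rw [hz]; push_cast; ring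
  exact_mod_cast this

theorem muOf_skew (lam nu : Ptn) (k : ℕ) (he : ∀ n, Even (nu.part n))
    (hs : HStrip lam nu) (hsk : skewSize nu lam = k) :
    ∃ j, 2 * j ≤ k ∧ nu.part 0 = lam.part 0 + lam.part 0 % 2 + 2 * j ∧
      skewSize lam (muOf lam nu he hs) = k - 2 * j := by
  obtain ⟨N, hN⟩ := lam.fin
  have hz := sum_rel lam (muOf lam nu he hs) nu (muOf_rel lam nu he hs)
    (muOf_hstrip lam nu he hs).1 hs.1 hN
  rw [hsk] at hz
  have hnat : nu.part 0 + skewSize lam (muOf lam nu he hs)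
      = k + lam.part 0 + lam.part 0 % 2 := by
    have : ((nu.part 0 + skewSize lam (muOf lam nu he hs) : ℕ) : ℤ)
        = ((k + lam.part 0 + lam.part 0 % 2 : ℕ) : ℤ) := by push_cast; linarith
    exact_mod_cast this
  have e0 : nu.part 0 % 2 = 0 := Nat.even_iff.mp (he 0)
  have h0 : lam.part 0 ≤ nu.part 0 := hs.1 0
  exact ⟨(nu.part 0 - lam.part 0 - lam.part 0 % 2) / 2, by omega, by omega, by omega⟩
end PE


open Ptn in
/-- For every partition `lam` and `k ≥ 0`, the number of partitions `ν` with
all parts even such that `lam ≺ ν` and `|ν/lam| = k` equals the sum over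
`0 ≤ i ≤ ⌊k/2⌋` of the number of partitions `μ` with all parts even such that
`μ ≺ lam` and `|lam/μ| = k - 2i`. -/
theorem projection_even_partitions (lam : Ptn) (k : ℕ) :
    Nat.card {ν : Ptn // (∀ i, Even (ν.part i)) ∧ HStrip lam ν ∧ skewSize ν lam = k} =
      ∑ i ∈ Finset.range (k / 2 + 1),
        Nat.card {mu : Ptn // (∀ j, Even (mu.part j)) ∧ HStrip mu lam ∧
          skewSize lam mu = k - 2 * i} := by
  classical
  let g : ((i : Fin (k / 2 + 1)) × {mu : Ptn // (∀ j, Even (mu.part j)) ∧ HStrip mu lam ∧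
        skewSize lam mu = k - 2 * (i : ℕ)}) →
      {ν : Ptn // (∀ i, Even (ν.part i)) ∧ HStrip lam ν ∧ skewSize ν lam = k} :=
    fun x => ⟨PE.nuOf lam x.2.val (x.1 : ℕ) x.2.property.1 x.2.property.2.1,
      PE.nuOf_even lam x.2.val (x.1 : ℕ) x.2.property.1 x.2.property.2.1,
      PE.nuOf_hstrip lam x.2.val (x.1 : ℕ) x.2.property.1 x.2.property.2.1,
      PE.nuOf_skew lam x.2.val k (x.1 : ℕ) x.2.property.1 x.2.property.2.1
        (by have := x.1.isLt; omega) x.2.property.2.2⟩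
  have hg : Function.Bijective g := by
    constructor
    · rintro ⟨i, mu, hmu⟩ ⟨i', mu', hmu'⟩ hxy
      have hv := congrArg Subtype.val hxy
      have hp : ∀ n, (PE.nuOf lam mu (i : ℕ) hmu.1 hmu.2.1).part n
          = (PE.nuOf lam mu' (i' : ℕ) hmu'.1 hmu'.2.1).part n :=
        fun n => congrArg (fun p => p.part n) hv
      have h0 : lam.part 0 + lam.part 0 % 2 + 2 * (i : ℕ)
          = lam.part 0 + lam.part 0 % 2 + 2 * (i' : ℕ) := hp 0
      have hii : i = i' := Fin.ext (by omega)
      subst hii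
      have hmm : mu = mu' := by
        apply PE.Ptn.ext'
        intro n
        have h1 : (lam.part n - lam.part n % 2 - mu.part n)
            + lam.part (n+1) + lam.part (n+1) % 2
            = (lam.part n - lam.part n % 2 - mu'.part n)
            + lam.part (n+1) + lam.part (n+1) % 2 := hp (n+1)
        have e1 : mu.part n % 2 = 0 := Nat.even_iff.mp (hmu.1 n)
        have e2 : mu'.part n % 2 = 0 := Nat.even_iff.mp (hmu'.1 n)
        have l1 : mu.part n ≤ lam.part n := hmu.2.1.1 n
        have l2 : mu'.part n ≤ lam.part n := hmu'.2.1.1 n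
        omega
      subst hmm
      rfl
    · rintro ⟨nu, hnu⟩
      obtain ⟨j, h2j, h0, hskmu⟩ := PE.muOf_skew lam nu k hnu.1 hnu.2.1 hnu.2.2
      refine ⟨⟨⟨j, by omega⟩, ⟨PE.muOf lam nu hnu.1 hnu.2.1,
        PE.muOf_even lam nu hnu.1 hnu.2.1, PE.muOf_hstrip lam nu hnu.1 hnu.2.1, hskmu⟩⟩, ?_⟩
      apply Subtype.ext
      apply PE.Ptn.ext'
      intro n
      match n with
      | 0 =>
        show lam.part 0 + lam.part 0 % 2 + 2 * j = nu.part 0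
        omega
      | n+1 =>
        show (lam.part n - lam.part n % 2
            - ((lam.part n - lam.part n % 2 - nu.part (n+1))
              + lam.part (n+1) + lam.part (n+1) % 2))
            + lam.part (n+1) + lam.part (n+1) % 2 = nu.part (n+1)
        have e1 : nu.part (n+1) % 2 = 0 := Nat.even_iff.mp (hnu.1 (n+1))
        have l1 : nu.part (n+1) ≤ lam.part n := hnu.2.1.2 n
        have l2 : lam.part (n+1) ≤ nu.part (n+1) := hnu.2.1.1 (n+1)
        omega
  obtain ⟨N, hN⟩ := lam.fin
  have hfin : ∀ i : ℕ, Finite {mu : Ptn // (∀ j, Even (mu.part j)) ∧ HStrip mu lam ∧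
      skewSize lam mu = k - 2 * i} := by
    intro i
    apply Finite.of_injective (β := Fin N → Fin (lam.part 0 + 1))
      (f := fun mu => fun n =>
        ⟨mu.val.part n, Nat.lt_succ_of_le (le_trans (mu.property.2.1.1 n)
          (lam.anti (Nat.zero_le n)))⟩)
    intro a b hab
    apply Subtype.ext
    apply PE.Ptn.ext'
    intro n
    by_cases hn : n < N
    · exact congrArg Fin.val (congrFun hab ⟨n, hn⟩)
    · have h1 := hN n (by omega)
      have h2 : a.val.part n ≤ lam.part n := a.property.2.1.1 n
      have h3 : b.val.part n ≤ lam.part n := b.property.2.1.1 n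
      omega
  haveI : ∀ i : Fin (k / 2 + 1), Fintype {mu : Ptn // (∀ j, Even (mu.part j)) ∧
      HStrip mu lam ∧ skewSize lam mu = k - 2 * (i : ℕ)} :=
    fun i => @Fintype.ofFinite _ (hfin i)
  have h1 := Nat.card_congr (Equiv.ofBijective g hg).symm
  rw [h1, Nat.card_eq_fintype_card, Fintype.card_sigma,
    ← Fin.sum_univ_eq_sum_range (fun n => Nat.card {mu : Ptn // (∀ j, Even (mu.part j)) ∧
      HStrip mu lam ∧ skewSize lam mu = k - 2 * n}) (k / 2 + 1)]
  exact Finset.sum_congr rfl fun i _ => (Nat.card_eq_fintype_card).symm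
end

section
/- For every partition λ, there is exactly one partition ν with all column lengths even such that λ ≺ ν, and exactly one partition μ with all column lengths even such that μ ≺ λ; moreover |ν/λ| = |λ/μ| = the number of odd columns of λ. Equivalently, π_{P_e'} ∘ U_x = π_{P_e'} ∘ D_x. -/
namespace Ptn

/-- A partition has all columns of even length iff its conjugate has all parts even. -/
def EvenCols (lam : Ptn) : Prop := ∀ j, Even ((conj lam).part j)

/-- The number of odd-length columns of a partition. -/
noncomputable def oddColCount (lam : Ptn) : ℕ := Set.ncard {j | Odd ((conj lam).part j)}

end Ptn

/-!
Column `j` of `λ` has length `#{i | j < λᵢ}`, so it is odd exactly when `λ_{2k+1} ≤ j < λ_{2k}`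
for some `k`. Hence `λ` has even columns iff `λ_{2k} = λ_{2k+1}` for all `k`, and the odd columns
are the disjoint union of the intervals `[λ_{2k+1}, λ_{2k})`. The horizontal strip conditions
`λᵢ ≤ νᵢ ≤ λᵢ₋₁` and `λᵢ₊₁ ≤ μᵢ ≤ λᵢ` then force `ν_{2k} = ν_{2k+1} = λ_{2k}` and
`μ_{2k} = μ_{2k+1} = λ_{2k+1}`, and both skew shapes have `∑ₖ (λ_{2k} - λ_{2k+1})` cells.
-/

open Finset

namespace Ptn

theorem part_injective : Function.Injective Ptn.part := by
  rintro ⟨_, _, _⟩ ⟨_, _, _⟩ rfl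
  rfl

theorem conj_part_eq {lam : Ptn} {j n : ℕ} (hlt : ∀ i < n, j < lam.part i)
    (hle : lam.part n ≤ j) : (conj lam).part j = n := by
  have hcol : {i | j < lam.part i} = Set.Iio n := by
    ext i
    refine ⟨fun hi => ?_, hlt i⟩
    by_contra hni
    exact (lam.anti (not_lt.mp hni)).trans hle |>.not_gt hi
  change Set.ncard {i | j < lam.part i} = n
  rw [hcol, ← coe_range, Set.ncard_coe_finset, card_range]

theorem odd_conj_part_iff (lam : Ptn) (j : ℕ) :
    Odd ((conj lam).part j) ↔ ∃ k, lam.part (2 * k + 1) ≤ j ∧ j < lam.part (2 * k) := by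
  obtain ⟨N, hN⟩ := lam.fin
  have hex : ∃ i, lam.part i ≤ j := ⟨N, by simp [hN N le_rfl]⟩
  rw [conj_part_eq (fun i hi => not_le.mp (Nat.find_min hex hi)) (Nat.find_spec hex)]
  constructor
  · rintro ⟨k, hk⟩
    exact ⟨k, hk ▸ Nat.find_spec hex, not_le.mp (Nat.find_min hex (by omega))⟩
  · rintro ⟨k, hle, hlt⟩
    have hupper : Nat.find hex ≤ 2 * k + 1 := Nat.find_min' hex hle
    have hlower : 2 * k < Nat.find hex := by
      by_contra! h
      exact ((lam.anti h).trans (Nat.find_spec hex)).not_gt hlt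
    exact ⟨k, by omega⟩

theorem evenCols_iff (lam : Ptn) : EvenCols lam ↔ ∀ k, lam.part (2 * k) = lam.part (2 * k + 1) := by
  simp only [EvenCols, ← Nat.not_odd_iff_even, odd_conj_part_iff, not_exists, not_and, not_lt]
  constructor
  · intro h k
    exact le_antisymm (h (lam.part (2 * k + 1)) k le_rfl) (lam.anti (by omega))
  · intro h j k hj
    exact h k ▸ hj

theorem sum_range_two_mul {M : Type*} [AddCommMonoid M] (f : ℕ → M) (n : ℕ) :
    ∑ i ∈ range (2 * n), f i = ∑ k ∈ range n, (f (2 * k) + f (2 * k + 1)) := by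
  induction n with
  | zero => simp
  | succ n ih => rw [mul_add, mul_one, sum_range_succ, sum_range_succ, sum_range_succ, ih, add_assoc]

theorem skewSize_eq_sum_range {lam mu : Ptn} {n : ℕ} (hn : ∀ i, n ≤ i → lam.part i = 0) :
    skewSize lam mu = ∑ i ∈ range n, (lam.part i - mu.part i) := by
  refine finsum_eq_sum_of_support_subset _ fun i hi => ?_
  by_contra hin
  exact hi (by simp [hn i (by simpa using hin)])

theorem oddColCount_eq_sum_range {lam : Ptn} {n : ℕ} (hn : ∀ i, n ≤ i → lam.part i = 0) :
    oddColCount lam = ∑ k ∈ range n, (lam.part (2 * k) - lam.part (2 * k + 1)) := by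
  have hodd : {j | Odd ((conj lam).part j)} =
      ↑((range n).biUnion fun k => Ico (lam.part (2 * k + 1)) (lam.part (2 * k))) := by
    ext j
    simp only [Set.mem_ofPred_eq, coe_biUnion, coe_range, coe_Ico, Set.mem_iUnion, Set.mem_Iio,
      Set.mem_Ico, exists_prop, odd_conj_part_iff]
    refine ⟨fun ⟨k, hk⟩ => ⟨k, ?_, hk⟩, fun ⟨k, _, hk⟩ => ⟨k, hk⟩⟩
    by_contra! h
    simp [hn (2 * k) (by omega)] at hk
  have hdisj : Set.PairwiseDisjoint ↑(range n)
      fun k => Ico (lam.part (2 * k + 1)) (lam.part (2 * k)) := by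
    refine fun k _ l _ hkl => disjoint_left.mpr fun j hjk hjl => ?_
    simp only [mem_Ico] at hjk hjl
    rcases lt_or_gt_of_ne hkl with h | h
    · have := lam.anti (show 2 * k + 1 ≤ 2 * l by omega); omega
    · have := lam.anti (show 2 * l + 1 ≤ 2 * k by omega); omega
  rw [oddColCount, hodd, Set.ncard_coe_finset, card_biUnion hdisj]
  simp only [Nat.card_Ico]

def addOddCols (lam : Ptn) : Ptn where
  part i := lam.part (2 * (i / 2))
  anti _ _ h := lam.anti (by omega)
  fin := by
    obtain ⟨N, hN⟩ := lam.fin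
    exact ⟨N + 1, fun n hn => hN _ (by omega)⟩

def removeOddCols (lam : Ptn) : Ptn where
  part i := lam.part (2 * (i / 2) + 1)
  anti _ _ h := lam.anti (by omega)
  fin := by
    obtain ⟨N, hN⟩ := lam.fin
    exact ⟨N, fun n hn => hN _ (by omega)⟩

theorem evenCols_addOddCols (lam : Ptn) : EvenCols (addOddCols lam) :=
  (evenCols_iff _).mpr fun k => congrArg lam.part (by omega)

theorem evenCols_removeOddCols (lam : Ptn) : EvenCols (removeOddCols lam) :=
  (evenCols_iff _).mpr fun k => congrArg lam.part (by omega)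

theorem hStrip_addOddCols (lam : Ptn) : HStrip lam (addOddCols lam) :=
  ⟨fun _ => lam.anti (by omega), fun _ => lam.anti (by omega)⟩

theorem hStrip_removeOddCols (lam : Ptn) : HStrip (removeOddCols lam) lam :=
  ⟨fun _ => lam.anti (by omega), fun _ => lam.anti (by omega)⟩

theorem evenCols_and_hStrip_iff_eq_addOddCols {lam nu : Ptn} :
    EvenCols nu ∧ HStrip lam nu ↔ nu = addOddCols lam := by
  refine ⟨fun ⟨hE, hS⟩ => part_injective (funext fun i => ?_), ?_⟩
  · obtain ⟨k, hk | hk⟩ : ∃ k, i = 2 * k ∨ i = 2 * k + 1 := ⟨i / 2, by omega⟩ <;>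
    · have hpair := (evenCols_iff nu).mp hE k
      have hlow := hS.1 (2 * k)
      have hhigh := hS.2 (2 * k)
      change nu.part i = lam.part (2 * (i / 2))
      rw [show 2 * (i / 2) = 2 * k by omega, hk]
      omega
  · rintro rfl
    exact ⟨evenCols_addOddCols lam, hStrip_addOddCols lam⟩

theorem evenCols_and_hStrip_iff_eq_removeOddCols {lam mu : Ptn} :
    EvenCols mu ∧ HStrip mu lam ↔ mu = removeOddCols lam := by
  refine ⟨fun ⟨hE, hS⟩ => part_injective (funext fun i => ?_), ?_⟩
  · obtain ⟨k, hk | hk⟩ : ∃ k, i = 2 * k ∨ i = 2 * k + 1 := ⟨i / 2, by omega⟩ <;>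
    · have hpair := (evenCols_iff mu).mp hE k
      have hlow := hS.2 (2 * k)
      have hhigh := hS.1 (2 * k + 1)
      change mu.part i = lam.part (2 * (i / 2) + 1)
      rw [show 2 * (i / 2) = 2 * k by omega, hk]
      omega
  · rintro rfl
    exact ⟨evenCols_removeOddCols lam, hStrip_removeOddCols lam⟩

theorem skewSize_addOddCols (lam : Ptn) : skewSize (addOddCols lam) lam = oddColCount lam := by
  obtain ⟨N, hN⟩ := lam.fin
  rw [skewSize_eq_sum_range (lam := addOddCols lam) (n := 2 * N) fun i hi => hN _ (by omega),
    sum_range_two_mul, oddColCount_eq_sum_range hN]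
  refine sum_congr rfl fun k _ => ?_
  change lam.part (2 * (2 * k / 2)) - _ + (lam.part (2 * ((2 * k + 1) / 2)) - _) = _
  rw [show 2 * (2 * k / 2) = 2 * k by omega, show 2 * ((2 * k + 1) / 2) = 2 * k by omega]
  omega

theorem skewSize_removeOddCols (lam : Ptn) :
    skewSize lam (removeOddCols lam) = oddColCount lam := by
  obtain ⟨N, hN⟩ := lam.fin
  rw [skewSize_eq_sum_range (n := 2 * N) fun i hi => hN _ (by omega), sum_range_two_mul,
    oddColCount_eq_sum_range hN]
  refine sum_congr rfl fun k _ => ?_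
  change _ - lam.part (2 * (2 * k / 2) + 1) + (_ - lam.part (2 * ((2 * k + 1) / 2) + 1)) = _
  rw [show 2 * (2 * k / 2) = 2 * k by omega, show 2 * ((2 * k + 1) / 2) = 2 * k by omega]
  omega

end Ptn

open Ptn in
/-- For every partition `lam`, there is exactly one partition `ν` with all
column lengths even such that `lam ≺ ν`, and exactly one partition `μ` with
all column lengths even such that `μ ≺ lam`; moreover
`|ν/lam| = |lam/μ| =` the number of odd columns of `lam`. -/
theorem projection_even_column_partitions (lam : Ptn) :
    (∃! ν : Ptn, EvenCols ν ∧ HStrip lam ν) ∧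
    (∃! mu : Ptn, EvenCols mu ∧ HStrip mu lam) ∧
    (∀ ν mu : Ptn, EvenCols ν → HStrip lam ν → EvenCols mu → HStrip mu lam →
      skewSize ν lam = oddColCount lam ∧ skewSize lam mu = oddColCount lam) := by
  refine ⟨(existsUnique_congr fun _ => evenCols_and_hStrip_iff_eq_addOddCols).mpr existsUnique_eq,
    (existsUnique_congr fun _ => evenCols_and_hStrip_iff_eq_removeOddCols).mpr existsUnique_eq,
    fun ν mu hEν hSν hEmu hSmu => ?_⟩
  rw [evenCols_and_hStrip_iff_eq_addOddCols.mp ⟨hEν, hSν⟩,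
    evenCols_and_hStrip_iff_eq_removeOddCols.mp ⟨hEmu, hSmu⟩]
  exact ⟨skewSize_addOddCols lam, skewSize_removeOddCols lam⟩
end
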